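/- arXiv:1009.0146 — 7 statements merged into one kernel-verified Lean document; each statement's English description precedes it below -/
import Mathlib

section
/- For the classical Frame-Stewart numbers with 4 pegs, defined by S4(0)=0 and S4(n) = min over 1≤t≤n of {2·S4(n−t) + 2^t − 1}, the sequence of differences satisfies S4(n) − S4(n−1) = 2^(i−1) whenever binom(i,2) < n ≤ binom(i+1,2). -/
/-!
The candidate is the sequence `F` whose increments `F n - F (n - 1)` are `2 ^ (i - 1)` on the
`i`-th block `i.choose 2 < n ≤ (i + 1).choose 2`. For fixed `n`, the cost
`c t = 2 * F (n - t) + 2 ^ t` of splitting off `t` discs changes by `2 ^ t - 2 ^ j` from `t` to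
`t + 1`, where `j` is the block of `n - t`; so it decreases while `t` is below the block `i` of
`n` and increases afterwards, and its minimum `c i` equals `F n + 1` by induction on `n`. Hence
`F` satisfies the Frame–Stewart recursion, and any solution of it is `F`.
-/

namespace FrameStewart

lemma choose_two_succ (i : ℕ) : (i + 1).choose 2 = i.choose 2 + i := by
  rw [Nat.choose_succ_succ', Nat.choose_one_right, add_comm]

lemma exists_le_choose_two_succ (n : ℕ) : ∃ i, n ≤ (i + 1).choose 2 :=
  ⟨n, by rw [choose_two_succ]; omega⟩

/-- The block of `n`: the `i` with `i.choose 2 < n ≤ (i + 1).choose 2` (and `row 0 = 0`). -/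
def row (n : ℕ) : ℕ := Nat.find (exists_le_choose_two_succ n)

lemma le_choose_two_row_succ (n : ℕ) : n ≤ (row n + 1).choose 2 :=
  Nat.find_spec (exists_le_choose_two_succ n)

lemma row_le {n i : ℕ} (h : n ≤ (i + 1).choose 2) : row n ≤ i :=
  Nat.find_min' _ h

lemma le_row {n i : ℕ} (h : i.choose 2 < n) : i ≤ row n := by
  by_contra! hlt
  have := Nat.choose_le_choose 2 (show row n + 1 ≤ i from hlt)
  have := le_choose_two_row_succ n
  omega

lemma row_eq {n i : ℕ} (h₁ : i.choose 2 < n) (h₂ : n ≤ (i + 1).choose 2) : row n = i :=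
  le_antisymm (row_le h₂) (le_row h₁)

lemma one_le_row {n : ℕ} (hn : 0 < n) : 1 ≤ row n :=
  le_row (by simpa using hn)

lemma row_le_self (n : ℕ) : row n ≤ n :=
  row_le (by rw [choose_two_succ]; omega)

lemma choose_two_row_lt {n : ℕ} (hn : 0 < n) : (row n).choose 2 < n := by
  obtain ⟨j, hj⟩ : ∃ j, row n = j + 1 := ⟨row n - 1, by have := one_le_row hn; omega⟩
  have := Nat.find_min (exists_le_choose_two_succ n) (show j < row n by omega)
  rw [hj]
  omega

lemma row_succ_eq_or (n : ℕ) : row (n + 1) = row n ∨ row (n + 1) = row n + 1 := by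
  have hmono : row n ≤ row (n + 1) := Nat.find_mono fun _ h => (Nat.le_succ n).trans h
  have hstep : row (n + 1) ≤ row n + 1 := by
    apply row_le
    have := le_choose_two_row_succ n
    rw [choose_two_succ (row n + 1)]
    omega
  omega

def frameStewart4 : ℕ → ℕ
  | 0 => 0
  | n + 1 => frameStewart4 n + 2 ^ (row (n + 1) - 1)

local notation "F" => frameStewart4

lemma two_mul_frameStewart4_succ (n : ℕ) : 2 * F (n + 1) = 2 * F n + 2 ^ row (n + 1) := by
  have h := one_le_row n.succ_pos
  rw [frameStewart4, mul_add, ← pow_succ', Nat.sub_add_cancel h]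

/-- `cost n t - 1` is the cost of moving `n` discs by first parking `t` of them; the `+ 1` keeps
truncated subtraction out of the computations. -/
def cost (n t : ℕ) : ℕ := 2 * F (n - t) + 2 ^ t

lemma cost_succ_add {n s : ℕ} (hs : s < n) :
    cost n (s + 1) + 2 ^ row (n - s) = cost n s + 2 ^ s := by
  obtain ⟨m, hm⟩ : ∃ m, n - s = m + 1 := ⟨n - s - 1, by omega⟩
  rw [cost, cost, show n - (s + 1) = m by omega, hm, two_mul_frameStewart4_succ, pow_succ]
  ring

lemma cost_succ_left {n t : ℕ} (ht : t ≤ n) :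
    cost (n + 1) t = cost n t + 2 ^ row (n + 1 - t) := by
  rw [cost, cost, show n + 1 - t = n - t + 1 by omega, two_mul_frameStewart4_succ]
  ring

lemma cost_row_le {n t : ℕ} (hn : 0 < n) (ht : t ≤ n) : cost n (row n) ≤ cost n t := by
  have hlow := choose_two_row_lt hn
  have hup := le_choose_two_row_succ n
  have hanti : AntitoneOn (cost n) (Set.Icc 0 (row n)) := by
    refine antitoneOn_of_add_one_le Set.ordConnected_Icc fun s _ _ ⟨_, hs⟩ => ?_
    have hchoose := Nat.choose_le_choose 2 hs
    rw [choose_two_succ] at hchoose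
    have hs_row : s ≤ row (n - s) := le_row (by omega)
    have := cost_succ_add (show s < n by have := row_le_self n; omega)
    have := Nat.pow_le_pow_right two_pos hs_row
    omega
  have hmono : MonotoneOn (cost n) (Set.Icc (row n) n) := by
    refine monotoneOn_of_le_add_one Set.ordConnected_Icc fun s _ ⟨hs, _⟩ ⟨_, hs'⟩ => ?_
    have hchoose := Nat.choose_le_choose 2 (show row n + 1 ≤ s + 1 by omega)
    have hrow_s : row (n - s) ≤ s := row_le (by omega)
    have := cost_succ_add (show s < n by omega)
    have := Nat.pow_le_pow_right two_pos hrow_s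
    omega
  rcases le_total t (row n) with htr | hrt
  · exact hanti ⟨t.zero_le, htr⟩ ⟨(row n).zero_le, le_rfl⟩ htr
  · exact hmono ⟨le_rfl, row_le_self n⟩ ⟨hrt, ht⟩ hrt

lemma cost_row {n : ℕ} (hn : 0 < n) : cost n (row n) = F n + 1 := by
  induction n with
  | zero => omega
  | succ n ih =>
    rcases Nat.eq_zero_or_pos n with rfl | hn
    · simp [cost, row_eq (show (1 : ℕ).choose 2 < 1 by decide) le_rfl, frameStewart4]
    have hlow := choose_two_row_lt hn
    have hup := le_choose_two_row_succ n
    rcases row_succ_eq_or n with hsame | hnext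
    · obtain ⟨j, hj⟩ : ∃ j, row n = j + 1 := ⟨row n - 1, by have := one_le_row hn; omega⟩
      have hup' := le_choose_two_row_succ (n + 1)
      rw [hsame, hj, choose_two_succ] at hup'
      rw [hj, choose_two_succ] at hlow
      have hback : row (n - j) = j := row_eq (by omega) (by omega)
      rw [hsame, cost_succ_left (row_le_self n), ih hn, hj, show n + 1 - (j + 1) = n - j by omega,
        hback, frameStewart4, hsame, hj, Nat.add_sub_cancel]
      ring
    · have hedge : n = (row n + 1).choose 2 := by
        have := choose_two_row_lt n.succ_pos
        rw [hnext] at this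
        omega
      have hcost := ih hn
      rw [cost] at hcost
      rw [hnext, frameStewart4, hnext, Nat.add_sub_cancel, cost,
        show n + 1 - (row n + 1) = n - row n by omega, pow_succ]
      omega

lemma isLeast_frameStewart4 {n : ℕ} (hn : 0 < n) :
    IsLeast {v | ∃ t, 1 ≤ t ∧ t ≤ n ∧ v = 2 * F (n - t) + (2 ^ t - 1)} (F n) := by
  have hrow := cost_row hn
  unfold cost at hrow
  refine ⟨⟨row n, one_le_row hn, row_le_self n, ?_⟩, ?_⟩
  · have := (row n).one_le_two_pow
    omega
  · rintro _ ⟨t, -, ht, rfl⟩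
    have := cost_row_le hn ht
    unfold cost at this
    have := t.one_le_two_pow
    omega

lemma eq_frameStewart4 (S4 : ℕ → ℕ) (h0 : S4 0 = 0)
    (hrec : ∀ n, 1 ≤ n →
      S4 n = sInf {v | ∃ t, 1 ≤ t ∧ t ≤ n ∧ v = 2 * S4 (n - t) + (2 ^ t - 1)})
    (n : ℕ) : S4 n = F n := by
  induction n using Nat.strong_induction_on with
  | _ n ih =>
    rcases Nat.eq_zero_or_pos n with rfl | hn
    · exact h0
    rw [hrec n hn, ← (isLeast_frameStewart4 hn).csInf_eq]
    congr 1
    ext v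
    refine exists_congr fun t => and_congr_right fun ht => and_congr_right fun _ => ?_
    rw [ih (n - t) (by omega)]

end FrameStewart

open FrameStewart in
/-- Classical Frame–Stewart numbers with 4 pegs: S4(n) − S4(n−1) = 2^(i−1)
whenever binom(i,2) < n ≤ binom(i+1,2). -/
theorem frame_stewart_four_pegs_diff
    (S4 : ℕ → ℕ) (h0 : S4 0 = 0)
    (hrec : ∀ n, 1 ≤ n →
      S4 n = sInf {v | ∃ t, 1 ≤ t ∧ t ≤ n ∧ v = 2 * S4 (n - t) + (2 ^ t - 1)})
    (i n : ℕ) (h1 : i.choose 2 < n) (h2 : n ≤ (i + 1).choose 2) :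
    S4 n - S4 (n - 1) = 2 ^ (i - 1) := by
  obtain ⟨m, rfl⟩ : ∃ m, n = m + 1 := ⟨n - 1, by omega⟩
  rw [eq_frameStewart4 S4 h0 hrec, eq_frameStewart4 S4 h0 hrec, Nat.add_sub_cancel,
    frameStewart4, row_eq h1 h2, Nat.add_sub_cancel_left]
end

section
/- Let (p_i)_{i≥3} be a sequence of integers all greater than 1, and for each k ≥ 3 let (u^k_j)_{j≥1} be the nondecreasing enumeration (with multiplicity) of all products ∏_{i=3}^{k} p_i^{α_i} with α_i ≥ 0. For k ≥ 4, define k_1 = 1 and k_j = min{ l > k_{j−1} : u^k_l = u^{k−1}_j } for j ≥ 2. Then for every integer n with k_j < n < k_{j+1}, we have u^k_n = p_k · u^k_{n−j}. -/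
/-!
Write `F_k(x)` for the number of indices `l ≥ 1` with `u^k_l ≤ x`. Splitting the exponent
vectors according to whether `α_k = 0` gives `F_k(x) = F_{k-1}(x) + F_k(x / p_k)`, so `u^k` is the
sorted merge of `u^{k-1}` and `p_k · u^k`, in which each term of `u^{k-1}` precedes the equal terms
of `p_k · u^k`. Hence `k_j = j + #{m : p_k u^k_m < u^{k-1}_j}`, and the positions strictly between
`k_j` and `k_{j+1}` are filled by the terms `p_k u^k_m` in order, `m` being the position minus `j`.
-/

def IsSmoothEnum (p : ℕ → ℕ) (k : ℕ) (u : ℕ → ℕ) : Prop :=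
  (∀ j, 1 ≤ j → u j ≤ u (j + 1)) ∧
  ∃ e : {j : ℕ // 1 ≤ j} ≃ (Finset.Icc 3 k → ℕ),
    ∀ j : {j : ℕ // 1 ≤ j}, u j.1 = ∏ i : (Finset.Icc 3 k : Finset ℕ), p i.1 ^ e j i

/-- `F x` is the number of indices `n ≥ 1` with `u n ≤ x`, for a nondecreasing sequence `u`. -/
def IsCountingFunction (u F : ℕ → ℕ) : Prop :=
  ∀ n x, 1 ≤ n → (u n ≤ x ↔ n ≤ F x)

namespace IsCountingFunction

variable {u F : ℕ → ℕ} {n m x : ℕ}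

theorem self_le_apply (hF : IsCountingFunction u F) (hn : 1 ≤ n) : n ≤ F (u n) :=
  (hF n _ hn).1 le_rfl

theorem lt_apply_iff (hF : IsCountingFunction u F) (hn : 1 ≤ n) : x < u n ↔ F x < n := by
  simpa only [not_le] using (hF n x hn).not

theorem monotone (hF : IsCountingFunction u F) : Monotone F := by
  intro x y hxy
  rcases Nat.eq_zero_or_pos (F x) with h | h
  · omega
  · exact (hF _ _ h).1 (((hF _ _ h).2 le_rfl).trans hxy)

theorem apply_le_apply (hF : IsCountingFunction u F) (hm : 1 ≤ m) (hmn : m ≤ n) :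
    u m ≤ u n :=
  (hF m _ hm).2 (hmn.trans (hF.self_le_apply (hm.trans hmn)))

theorem apply_eq_of_le_of_lt (hF : IsCountingFunction u F) (hn : 1 ≤ n) (hx : u n ≤ x)
    (hx' : x < u (n + 1)) : F x = n :=
  le_antisymm (Nat.lt_succ_iff.1 ((hF.lt_apply_iff (by omega)).1 hx')) ((hF n x hn).1 hx)

theorem const_mul {q : ℕ} (hF : IsCountingFunction u F) (hq : 0 < q) :
    IsCountingFunction (fun m => q * u m) (fun x => F (x / q)) := by
  intro n x hn
  rw [← hF n _ hn, Nat.le_div_iff_mul_le hq, mul_comm]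

end IsCountingFunction

/-
If `F = E + G` for the counting functions of `u`, `v`, `w`, then `u` is the sorted merge of `v` and
`w`, each term of `v` placed ahead of the equal terms of `w`: `v j` sits at position
`j + G (v j - 1)`, the `- 1` turning `G` into a count of the terms of `w` strictly below `v j`.
-/
section Merge

variable {u v w F E G : ℕ → ℕ} {j n l : ℕ}

theorem merge_apply_left (hF : IsCountingFunction u F) (hE : IsCountingFunction v E)
    (hsplit : ∀ x, F x = E x + G x) (hG : Monotone G) (hj : 1 ≤ j) (hvj : 0 < v j) :
    u (j + G (v j - 1)) = v j := by
  apply le_antisymm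
  · rw [hF (j + G (v j - 1)) (v j) (by omega), hsplit]
    have := hE.self_le_apply hj
    have := hG (Nat.sub_le (v j) 1)
    omega
  · by_contra! h
    have hle := (hF (j + G (v j - 1)) (v j - 1) (by omega)).1 (by omega)
    have := (hE.lt_apply_iff hj).1 (by omega : v j - 1 < v j)
    rw [hsplit] at hle
    omega

theorem merge_apply_right (hF : IsCountingFunction u F) (hE : IsCountingFunction v E)
    (hG : IsCountingFunction w G) (hsplit : ∀ x, F x = E x + G x) (hj : 1 ≤ j)
    (hvj : 0 < v j) (hn : j + G (v j - 1) < n) (hn' : n < j + 1 + G (v (j + 1) - 1)) :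
    u n = w (n - j) := by
  have hm : 1 ≤ n - j := by omega
  have hlo : v j ≤ w (n - j) := by
    by_contra! h
    have := (hG _ (v j - 1) hm).1 (by omega)
    omega
  have hhi : w (n - j) < v (j + 1) := by
    have := (hG _ _ hm).2 (by omega : n - j ≤ G (v (j + 1) - 1))
    omega
  have hEw : E (w (n - j)) = j := hE.apply_eq_of_le_of_lt hj hlo hhi
  apply le_antisymm
  · rw [hF n _ (by omega), hsplit, hEw]
    have := hG.self_le_apply hm
    omega
  · by_contra! h
    have hle := (hF n (w (n - j) - 1) (by omega)).1 (by omega)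
    have := hE.monotone (Nat.sub_le (w (n - j)) 1)
    have := (hG.lt_apply_iff hm).1 (by omega : w (n - j) - 1 < w (n - j))
    rw [hsplit] at hle
    omega

theorem merge_le_of_apply_eq (hF : IsCountingFunction u F) (hE : IsCountingFunction v E)
    (hsplit : ∀ x, F x = E x + G x) (hj : 1 ≤ j) (hl : j + G (v j - 1) < l)
    (hul : u l = v (j + 1)) : j + 1 + G (v (j + 1) - 1) ≤ l := by
  rcases (hE.apply_le_apply hj (Nat.le_add_right j 1)).eq_or_lt with heq | hlt
  · rw [← heq]
    omega
  · have hlt' := (hF.lt_apply_iff (by omega : 1 ≤ l)).1 (by omega : v (j + 1) - 1 < u l)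
    have := (hE j _ hj).1 (by omega : v j ≤ v (j + 1) - 1)
    rw [hsplit] at hlt'
    omega

theorem merge_positions_eq (hF : IsCountingFunction u F) (hE : IsCountingFunction v E)
    (hG : IsCountingFunction w G) (hsplit : ∀ x, F x = E x + G x) (hv1 : 0 < v 1)
    (hvw : v 1 ≤ w 1) {K : ℕ → ℕ} (hK1 : K 1 = 1)
    (hK : ∀ j, 2 ≤ j → K j = sInf {l | K (j - 1) < l ∧ u l = v j}) (hj : 1 ≤ j) :
    K j = j + G (v j - 1) := by
  induction j, hj using Nat.le_induction with
  | base =>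
    have : G (v 1 - 1) < 1 := (hG.lt_apply_iff le_rfl).1 (by omega)
    omega
  | succ j hj ih =>
    have hvj : 0 < v j := hv1.trans_le (hE.apply_le_apply le_rfl hj)
    have hmem : j + 1 + G (v (j + 1) - 1) ∈ {l | j + G (v j - 1) < l ∧ u l = v (j + 1)} := by
      have hvv := hE.apply_le_apply hj (Nat.le_add_right j 1)
      have := hG.monotone (Nat.sub_le_sub_right hvv 1)
      exact ⟨by omega, merge_apply_left hF hE hsplit hG.monotone (by omega) (by omega)⟩
    rw [hK (j + 1) (by omega), Nat.add_sub_cancel, ih]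
    exact le_antisymm (Nat.sInf_le hmem)
      (le_csInf ⟨_, hmem⟩ fun l hl => merge_le_of_apply_eq hF hE hsplit hj hl.1 hl.2)

end Merge

def smoothExps (p : ℕ → ℕ) (s : Finset ℕ) (x : ℕ) : Set (ℕ → ℕ) :=
  {f | (∀ i ∉ s, f i = 0) ∧ ∏ i ∈ s, p i ^ f i ≤ x}

section SmoothExps

variable {p : ℕ → ℕ} {s : Finset ℕ} {a x : ℕ}

theorem prod_pow_add_single (f : ℕ → ℕ) (ha : a ∈ s) :
    ∏ i ∈ s, p i ^ (f + Pi.single a 1 : ℕ → ℕ) i = p a * ∏ i ∈ s, p i ^ f i := by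
  have hsingle : ∏ i ∈ s, p i ^ (Pi.single a 1 : ℕ → ℕ) i = p a := by
    rw [Finset.prod_eq_single_of_mem a ha fun i _ hi => by simp [hi]]
    simp
  simp only [Pi.add_apply, pow_add, Finset.prod_mul_distrib, hsingle, mul_comm]

theorem finite_smoothExps (hp : ∀ i ∈ s, 1 < p i) (x : ℕ) : (smoothExps p s x).Finite := by
  refine Set.Finite.of_finite_image (f := fun f (i : s) => f i) ?_ ?_
  · refine (Set.Finite.pi fun _ => Set.finite_Iic x).subset ?_
    rintro _ ⟨f, ⟨-, hf⟩, rfl⟩ i -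
    have hle : p i ^ f i ≤ ∏ i ∈ s, p i ^ f i :=
      Finset.single_le_prod' (fun j hj => Nat.one_le_pow _ _ (Nat.zero_lt_of_lt (hp j hj))) i.2
    exact (Nat.lt_pow_self (hp i i.2)).le.trans (hle.trans hf)
  · intro f hf g hg hfg
    funext i
    by_cases hi : i ∈ s
    · exact congrFun hfg ⟨i, hi⟩
    · rw [hf.1 i hi, hg.1 i hi]

def smoothExpsEquiv (p : ℕ → ℕ) (s : Finset ℕ) (x : ℕ) :
    {g : s → ℕ // ∏ i : s, p i ^ g i ≤ x} ≃ smoothExps p s x where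
  toFun g := ⟨fun i => if h : i ∈ s then g.1 ⟨i, h⟩ else 0, by
    refine ⟨fun i hi => dif_neg hi, ?_⟩
    rw [← Finset.prod_coe_sort]
    simpa only [Finset.coe_mem, dif_pos] using g.2⟩
  invFun f := ⟨fun i => f.1 i, by
    rw [Finset.prod_coe_sort s fun i => p i ^ f.1 i]
    exact f.2.2⟩
  left_inv g := Subtype.ext (funext fun i => dif_pos i.2)
  right_inv f := Subtype.ext <| funext fun i => by
    by_cases hi : i ∈ s
    · exact dif_pos hi
    · exact (dif_neg hi).trans (f.2.1 i hi).symm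

theorem smoothExps_insert (ha : a ∉ s) (hpa : 0 < p a) :
    smoothExps p (insert a s) x =
      smoothExps p s x ∪ (· + Pi.single a 1) '' smoothExps p (insert a s) (x / p a) := by
  ext f
  constructor
  · rintro ⟨hsupp, hprod⟩
    by_cases hfa : f a = 0
    · refine Or.inl ⟨fun i hi => ?_, ?_⟩
      · by_cases hia : i = a
        · exact hia ▸ hfa
        · exact hsupp i (by simp [hia, hi])
      · rwa [Finset.prod_insert ha, hfa, pow_zero, one_mul] at hprod
    · have hf : f - Pi.single a 1 + Pi.single a 1 = f := by
        funext i
        by_cases hia : i = a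
        · subst hia
          simp only [Pi.add_apply, Pi.sub_apply, Pi.single_eq_same]
          omega
        · simp [hia]
      refine Or.inr ⟨f - Pi.single a 1, ⟨fun i hi => ?_, ?_⟩, hf⟩
      · simp [hsupp i hi]
      · rw [← hf, prod_pow_add_single _ (Finset.mem_insert_self a s)] at hprod
        rw [Nat.le_div_iff_mul_le hpa, mul_comm]
        exact hprod
  · rintro (⟨hsupp, hprod⟩ | ⟨g, ⟨hsupp, hprod⟩, rfl⟩)
    · refine ⟨fun i hi => hsupp i (by simp_all), ?_⟩
      rwa [Finset.prod_insert ha, hsupp a ha, pow_zero, one_mul]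
    · refine ⟨fun i hi => ?_, ?_⟩
      · have hia : i ≠ a := by rintro rfl; simp at hi
        simp [hsupp i hi, hia]
      · rw [prod_pow_add_single _ (Finset.mem_insert_self a s), mul_comm]
        exact (Nat.le_div_iff_mul_le hpa).1 hprod

theorem ncard_smoothExps_insert (ha : a ∉ s) (hp : ∀ i ∈ insert a s, 1 < p i) (x : ℕ) :
    (smoothExps p (insert a s) x).ncard =
      (smoothExps p s x).ncard + (smoothExps p (insert a s) (x / p a)).ncard := by
  have hpa : 0 < p a := Nat.zero_lt_of_lt (hp a (Finset.mem_insert_self a s))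
  have hdisj : Disjoint (smoothExps p s x)
      ((· + Pi.single a 1) '' smoothExps p (insert a s) (x / p a)) := by
    refine Set.disjoint_left.2 fun f hf ⟨g, _, hg⟩ => ?_
    have := congrFun hg a
    simp [hf.1 a ha] at this
  rw [smoothExps_insert ha hpa, Set.ncard_union_eq hdisj
      (finite_smoothExps (fun i hi => hp i (Finset.mem_insert_of_mem hi)) x)
      ((finite_smoothExps hp _).image _),
    Set.ncard_image_of_injective _ (add_left_injective _)]

end SmoothExps

noncomputable def countLE (u : ℕ → ℕ) (x : ℕ) : ℕ :=
  {l | 1 ≤ l ∧ u l ≤ x}.ncard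

namespace IsSmoothEnum

variable {p u : ℕ → ℕ} {k : ℕ}

theorem monotoneOn (hu : IsSmoothEnum p k u) : MonotoneOn u {l | 1 ≤ l} :=
  monotoneOn_nat_Ici_of_le_succ hu.1

theorem apply_one (hu : IsSmoothEnum p k u) (hp : ∀ i ∈ Finset.Icc 3 k, 0 < p i) : u 1 = 1 := by
  have hmono := hu.monotoneOn
  obtain ⟨-, e, he⟩ := hu
  have hpos : 0 < u 1 := by
    rw [he ⟨1, le_rfl⟩]
    exact Finset.prod_pos fun i _ => pow_pos (hp i i.2) _
  have hle : u 1 ≤ u (e.symm 0) := hmono (le_refl 1) (e.symm 0).2 (e.symm 0).2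
  have hone : u (e.symm 0) = 1 := by simp [he]
  omega

theorem nonempty_equiv_smoothExps (hu : IsSmoothEnum p k u) (x : ℕ) :
    Nonempty ({l | 1 ≤ l ∧ u l ≤ x} ≃ smoothExps p (Finset.Icc 3 k) x) := by
  obtain ⟨-, e, he⟩ := hu
  exact ⟨(Equiv.subtypeSubtypeEquivSubtypeInter (1 ≤ ·) (u · ≤ x)).symm.trans <|
    (e.subtypeEquiv fun j => by rw [he j]).trans (smoothExpsEquiv p _ x)⟩

theorem countLE_eq (hu : IsSmoothEnum p k u) (x : ℕ) :
    countLE u x = (smoothExps p (Finset.Icc 3 k) x).ncard := by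
  obtain ⟨e⟩ := hu.nonempty_equiv_smoothExps x
  rw [countLE, ← Nat.card_coe_set_eq, ← Nat.card_coe_set_eq, Nat.card_congr e]

theorem isCountingFunction (hu : IsSmoothEnum p k u) (hp : ∀ i ∈ Finset.Icc 3 k, 1 < p i) :
    IsCountingFunction u (countLE u) := by
  have hfin : ∀ x, {l | 1 ≤ l ∧ u l ≤ x}.Finite := fun x => by
    obtain ⟨e⟩ := hu.nonempty_equiv_smoothExps x
    have := (finite_smoothExps hp x).to_subtype
    exact Set.finite_coe_iff.1 (Finite.of_equiv _ e.symm)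
  intro n x hn
  constructor
  · intro h
    calc n = (Set.Icc 1 n).ncard := by simp
      _ ≤ countLE u x := Set.ncard_le_ncard
          (fun l hl => ⟨hl.1, (hu.monotoneOn hl.1 hn hl.2).trans h⟩) (hfin x)
  · intro h
    by_contra! hlt
    have : countLE u x ≤ (Set.Ico 1 n).ncard := by
      refine Set.ncard_le_ncard (fun l ⟨hl, hlx⟩ => ⟨hl, ?_⟩) (Set.finite_Ico _ _)
      by_contra! hnl
      have := hu.monotoneOn hn hl hnl
      omega
    simp only [Set.ncard_Ico_nat] at this
    omega

end IsSmoothEnum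

theorem countLE_eq_add_countLE_div {p uk uk1 : ℕ → ℕ} {k : ℕ} (hk : 3 ≤ k)
    (hp : ∀ i ∈ Finset.Icc 3 k, 1 < p i) (huk : IsSmoothEnum p k uk)
    (huk1 : IsSmoothEnum p (k - 1) uk1) (x : ℕ) :
    countLE uk x = countLE uk1 x + countLE uk (x / p k) := by
  have hIcc := Finset.insert_Icc_sub_one_right_eq_Icc hk
  rw [huk.countLE_eq, huk.countLE_eq, huk1.countLE_eq, ← hIcc]
  rw [← hIcc] at hp
  exact ncard_smoothExps_insert (fun h => by have := (Finset.mem_Icc.1 h).2; omega) hp x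

/-- Lemma 1: for k_j < n < k_{j+1}, u^k_n = p_k · u^k_{n−j}. -/
theorem smooth_enum_recursive_structure
    (p : ℕ → ℕ) (k : ℕ) (hk : 4 ≤ k)
    (hp : ∀ i, 3 ≤ i → i ≤ k → 1 < p i)
    (uk uk1 : ℕ → ℕ)
    (huk : IsSmoothEnum p k uk) (huk1 : IsSmoothEnum p (k - 1) uk1)
    (K : ℕ → ℕ) (hK1 : K 1 = 1)
    (hK : ∀ j, 2 ≤ j → K j = sInf {l | K (j - 1) < l ∧ uk l = uk1 j})
    (j n : ℕ) (hj : 1 ≤ j) (h1 : K j < n) (h2 : n < K (j + 1)) :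
    uk n = p k * uk (n - j) := by
  have hpk : ∀ i ∈ Finset.Icc 3 k, 1 < p i := fun i hi =>
    hp i (Finset.mem_Icc.1 hi).1 (Finset.mem_Icc.1 hi).2
  have hpk1 : ∀ i ∈ Finset.Icc 3 (k - 1), 1 < p i := fun i hi =>
    hp i (Finset.mem_Icc.1 hi).1 (by have := (Finset.mem_Icc.1 hi).2; omega)
  have hpos : 0 < p k := Nat.zero_lt_of_lt (hp k (by omega) le_rfl)
  have hF := huk.isCountingFunction hpk
  have hE := huk1.isCountingFunction hpk1
  have hG := hF.const_mul hpos
  have hsplit := countLE_eq_add_countLE_div (by omega) hpk huk huk1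
  have huk1_one := huk1.apply_one fun i hi => Nat.zero_lt_of_lt (hpk1 i hi)
  have huk_one := huk.apply_one fun i hi => Nat.zero_lt_of_lt (hpk i hi)
  have hvw : uk1 1 ≤ p k * uk 1 := by rw [huk1_one, huk_one, mul_one]; exact hpos
  have hKeq (i : ℕ) (hi : 1 ≤ i) :=
    merge_positions_eq hF hE hG hsplit (by omega) hvw hK1 hK hi
  rw [hKeq j hj] at h1
  rw [hKeq (j + 1) (by omega)] at h2
  exact merge_apply_right hF hE hG hsplit hj
    (by have := hE.apply_le_apply le_rfl hj; omega) h1 h2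
end

section
/- Let (p_i)_{i≥3} be a sequence of positive integers and define G^1_3(0)=0, G^1_3(n) = p_3·G^1_3(n−1) + 1, and for k ≥ 4, G^1_k(n) = min_{1≤t≤n}{ p_k·G^1_k(n−t) + G^1_{k−1}(t) }, G^1_k(0)=0. Let (u^k_j)_{j≥1} be the nondecreasing enumeration with multiplicity of all integers ∏_{i=3}^{k} p_i^{α_i}, α_i ≥ 0. Then G^1_k(n) = Σ_{j=1}^{n} u^k_j for every n ≥ 1 and k ≥ 3. -/
open Finset

/-!
Both sides equal the least possible sum of `n` distinct exponent tuples weighted by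
`α ↦ ∏ p_i ^ α_i`. For the enumeration this is because a nondecreasing enumeration lists the
`n` smallest values first. For `G^1_k`, split an optimal set of `n` tuples according to whether
the exponent of `p_k` vanishes: the `t` tuples with `α_k = 0` are an optimal set for `k - 1`,
and the others are `p_k` times an optimal set of `n - t` tuples for `k`. This is exactly the
recursion defining `G^1_k`; the constraint `t ≥ 1` is harmless since lowering `α_k` to `0` in
one tuple never increases the sum.
-/

/-- Junk value `0` (as `sInf ∅ = 0`) when `α` has fewer than `n` elements. -/
noncomputable def minFinsetSum {α : Type*} (f : α → ℕ) (n : ℕ) : ℕ :=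
  sInf {v | ∃ A : Finset α, #A = n ∧ ∑ a ∈ A, f a = v}

namespace minFinsetSum

variable {α β : Type*}

theorem le_sum (f : α → ℕ) (A : Finset α) : minFinsetSum f #A ≤ ∑ a ∈ A, f a :=
  Nat.sInf_le ⟨A, rfl, rfl⟩

theorem exists_sum_eq [Infinite α] (f : α → ℕ) (n : ℕ) :
    ∃ A : Finset α, #A = n ∧ ∑ a ∈ A, f a = minFinsetSum f n := by
  obtain ⟨A, hA⟩ := Infinite.exists_subset_card_eq α n
  exact Nat.sInf_mem (s := {v | ∃ A : Finset α, #A = n ∧ ∑ a ∈ A, f a = v}) ⟨_, A, hA, rfl⟩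

@[simp]
theorem zero (f : α → ℕ) : minFinsetSum f 0 = 0 :=
  Nat.eq_zero_of_le_zero (by simpa using le_sum f ∅)

theorem comp_equiv (σ : β ≃ α) (f : α → ℕ) (n : ℕ) :
    minFinsetSum (f ∘ σ) n = minFinsetSum f n := by
  unfold minFinsetSum
  congr 1
  ext v
  constructor
  · rintro ⟨A, rfl, rfl⟩
    exact ⟨A.map σ.toEmbedding, card_map _, by simp⟩
  · rintro ⟨A, rfl, rfl⟩
    exact ⟨A.map σ.symm.toEmbedding, card_map _, by simp⟩

theorem _root_.Monotone.sum_range_card_le_sum {v : ℕ → ℕ} (hv : Monotone v) (s : Finset ℕ) :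
    ∑ i ∈ range #s, v i ≤ ∑ i ∈ s, v i := by
  classical
  induction s using Finset.induction_on_max with
  | empty => simp
  | insert a s hlt ih =>
    have has : a ∉ s := fun h => lt_irrefl a (hlt a h)
    have hcard : #s ≤ a := by simpa using card_le_card (fun x hx => mem_range.2 (hlt x hx))
    rw [card_insert_of_notMem has, sum_range_succ, sum_insert has, add_comm (v a)]
    exact add_le_add ih (hv hcard)

theorem eq_sum_range_of_monotone {v : ℕ → ℕ} (hv : Monotone v) (n : ℕ) :
    minFinsetSum v n = ∑ i ∈ range n, v i := by
  refine le_antisymm (by simpa using le_sum v (range n)) (le_csInf ?_ ?_)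
  · exact ⟨_, range n, card_range n, rfl⟩
  · rintro _ ⟨A, rfl, rfl⟩
    exact hv.sum_range_card_le_sum A

theorem eq_sum_Icc_of_enum {u : ℕ → ℕ} {f : α → ℕ} (hu : ∀ j, 1 ≤ j → u j ≤ u (j + 1))
    (e : {j : ℕ // 1 ≤ j} ≃ α) (he : ∀ j, u j.1 = f (e j)) (n : ℕ) :
    minFinsetSum f n = ∑ j ∈ Icc 1 n, u j := by
  have hcomp : f ∘ (Equiv.pnatEquivNat.symm.trans e) = fun i => u (i + 1) :=
    funext fun i => (he _).symm
  have hmono : Monotone fun i => u (i + 1) :=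
    monotone_nat_of_le_succ fun i => hu (i + 1) (by omega)
  rw [← comp_equiv (Equiv.pnatEquivNat.symm.trans e), hcomp, eq_sum_range_of_monotone hmono,
    range_eq_Ico, sum_Ico_add', zero_add, Ico_add_one_right_eq_Icc]

end minFinsetSum

def extendWeight {β : Type*} (g : β → ℕ) (c : ℕ) (x : β × ℕ) : ℕ := g x.1 * c ^ x.2

namespace extendWeight

variable {β : Type*} (g : β → ℕ) (c : ℕ)

@[simp]
theorem apply_zero (b : β) : extendWeight g c (b, 0) = g b := by
  simp [extendWeight]

theorem apply_succ (b : β) (m : ℕ) :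
    extendWeight g c (b, m + 1) = c * extendWeight g c (b, m) := by
  simp only [extendWeight, pow_succ]
  ring

theorem minFinsetSum_le [Infinite β] {n t : ℕ} (htn : t ≤ n) :
    minFinsetSum (extendWeight g c) n
      ≤ c * minFinsetSum (extendWeight g c) (n - t) + minFinsetSum g t := by
  classical
  obtain ⟨B, hBcard, hBsum⟩ := minFinsetSum.exists_sum_eq g t
  obtain ⟨C, hCcard, hCsum⟩ := minFinsetSum.exists_sum_eq (extendWeight g c) (n - t)
  have hzero : Function.Injective fun b : β => (b, 0) := Prod.mk_left_injective 0
  have hshift : Function.Injective (Prod.map id Nat.succ : β × ℕ → β × ℕ) :=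
    Function.injective_id.prodMap Nat.succ_injective
  have hdisj : Disjoint (B.image fun b => (b, 0)) (C.image (Prod.map id Nat.succ)) := by
    simp [disjoint_left]
  have hcard : #(B.image (fun b => (b, 0)) ∪ C.image (Prod.map id Nat.succ)) = n := by
    rw [card_union_of_disjoint hdisj, card_image_of_injective _ hzero,
      card_image_of_injective _ hshift]
    omega
  calc minFinsetSum (extendWeight g c) n
      ≤ ∑ x ∈ B.image (fun b => (b, 0)) ∪ C.image (Prod.map id Nat.succ), extendWeight g c x :=
        hcard ▸ minFinsetSum.le_sum _ _
    _ = c * minFinsetSum (extendWeight g c) (n - t) + minFinsetSum g t := by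
        rw [sum_union hdisj, sum_image hzero.injOn, sum_image hshift.injOn, ← hBsum, ← hCsum,
          mul_sum, add_comm]
        simp only [apply_zero, Prod.map, id, Nat.succ_eq_add_one, apply_succ]

theorem le_sum (A : Finset (β × ℕ)) :
    c * minFinsetSum (extendWeight g c) (#A - #{x ∈ A | x.2 = 0})
      + minFinsetSum g #{x ∈ A | x.2 = 0} ≤ ∑ x ∈ A, extendWeight g c x := by
  classical
  rw [← sum_filter_add_sum_filter_not A (fun x : β × ℕ => x.2 = 0)]
  have hcard := card_filter_add_card_filter_not (s := A) (fun x : β × ℕ => x.2 = 0)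
  set A₀ := {x ∈ A | x.2 = 0}
  set A₁ := {x ∈ A | ¬x.2 = 0}
  have hinj₀ : Set.InjOn Prod.fst (A₀ : Set (β × ℕ)) := fun x hx y hy h => by
    simp only [coe_filter, Set.mem_ofPred_eq, A₀] at hx hy
    exact Prod.ext h (hx.2.trans hy.2.symm)
  have hinj₁ : Set.InjOn (fun x : β × ℕ => (x.1, x.2 - 1)) (A₁ : Set (β × ℕ)) :=
    fun x hx y hy h => by
    simp only [coe_filter, Set.mem_ofPred_eq, A₁] at hx hy
    simp only [Prod.mk.injEq] at h
    exact Prod.ext h.1 (by omega)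
  have h₀ : minFinsetSum g #A₀ ≤ ∑ x ∈ A₀, extendWeight g c x := by
    have hsum : ∑ x ∈ A₀, extendWeight g c x = ∑ b ∈ A₀.image Prod.fst, g b := by
      rw [sum_image hinj₀]
      refine sum_congr rfl fun x hx => ?_
      simp [extendWeight, (mem_filter.1 hx).2]
    rw [hsum, ← card_image_of_injOn hinj₀]
    exact minFinsetSum.le_sum _ _
  have h₁ : c * minFinsetSum (extendWeight g c) #A₁ ≤ ∑ x ∈ A₁, extendWeight g c x := by
    have hsum : ∑ x ∈ A₁, extendWeight g c x
        = c * ∑ x ∈ A₁.image (fun x : β × ℕ => (x.1, x.2 - 1)), extendWeight g c x := by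
      rw [sum_image hinj₁, mul_sum]
      refine sum_congr rfl fun x hx => ?_
      rw [← apply_succ, Nat.sub_add_cancel (Nat.one_le_iff_ne_zero.2 (mem_filter.1 hx).2)]
    rw [hsum, ← card_image_of_injOn hinj₁]
    exact Nat.mul_le_mul_left c (minFinsetSum.le_sum _ _)
  rw [show #A - #A₀ = #A₁ by omega]
  omega

theorem exists_sum_eq_minFinsetSum_of_mem_zero [Infinite β] (hc : 1 ≤ c) {n : ℕ} (hn : 1 ≤ n) :
    ∃ A : Finset (β × ℕ), #A = n ∧ ∑ x ∈ A, extendWeight g c x = minFinsetSum (extendWeight g c) n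
      ∧ ∃ x ∈ A, x.2 = 0 := by
  classical
  obtain ⟨A, hcard, hsum⟩ := minFinsetSum.exists_sum_eq (extendWeight g c) n
  by_cases hzero : ∃ x ∈ A, x.2 = 0
  · exact ⟨A, hcard, hsum, hzero⟩
  push Not at hzero
  -- exchange some `x ∈ A` for `(x.1, 0)`, whose weight is at most that of `x`
  obtain ⟨x, hx⟩ : A.Nonempty := card_pos.1 (by omega)
  have hnot : (x.1, 0) ∉ A.erase x := fun hmem => hzero _ (mem_of_mem_erase hmem) rfl
  have hcard' : #(insert (x.1, 0) (A.erase x)) = n := by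
    rw [card_insert_of_notMem hnot, card_erase_of_mem hx]
    omega
  refine ⟨insert (x.1, 0) (A.erase x), hcard', le_antisymm ?_ ?_, _, mem_insert_self _ _, rfl⟩
  · rw [sum_insert hnot, ← hsum, ← add_sum_erase A _ hx, apply_zero]
    gcongr
    exact Nat.le_mul_of_pos_right _ (pow_pos hc _)
  · exact hcard' ▸ minFinsetSum.le_sum _ _

theorem minFinsetSum_eq [Infinite β] (hc : 1 ≤ c) {n : ℕ} (hn : 1 ≤ n) :
    minFinsetSum (extendWeight g c) n = sInf {v | ∃ t, 1 ≤ t ∧ t ≤ n ∧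
      v = c * minFinsetSum (extendWeight g c) (n - t) + minFinsetSum g t} := by
  refine le_antisymm (le_csInf ⟨_, n, hn, le_rfl, rfl⟩ ?_) ?_
  · rintro _ ⟨t, -, htn, rfl⟩
    exact minFinsetSum_le g c htn
  · obtain ⟨A, hcard, hsum, x, hx, hx0⟩ := exists_sum_eq_minFinsetSum_of_mem_zero g c hc hn
    have ht : 1 ≤ #{x ∈ A | x.2 = 0} := card_pos.2 ⟨x, mem_filter.2 ⟨hx, hx0⟩⟩
    have htn : #{x ∈ A | x.2 = 0} ≤ n := hcard ▸ card_filter_le _ _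
    refine le_trans (Nat.sInf_le ?_) (hcard ▸ hsum ▸ le_sum g c A)
    exact ⟨_, ht, htn, rfl⟩

end extendWeight

def smoothWeight (p : ℕ → ℕ) (s : Finset ℕ) (α : s → ℕ) : ℕ := ∏ i : s, p i ^ α i

theorem minFinsetSum_smoothWeight_insert (p : ℕ → ℕ) {s t : Finset ℕ} {a : ℕ} (ha : a ∉ s)
    (ht : insert a s = t) :
    minFinsetSum (smoothWeight p t) = minFinsetSum (extendWeight (smoothWeight p s) (p a)) := by
  subst ht
  let ι := subtypeInsertEquivOption ha
  let φ : (s → ℕ) × ℕ ≃ (↥(insert a s) → ℕ) :=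
    (Equiv.prodComm _ _).trans (Equiv.piOptionEquivProd.symm.trans (ι.arrowCongr (.refl ℕ)).symm)
  have hφ : smoothWeight p (insert a s) ∘ φ = extendWeight (smoothWeight p s) (p a) := by
    funext x
    simp only [Function.comp_apply, smoothWeight, extendWeight]
    rw [← ι.symm.prod_comp, Fintype.prod_option, mul_comm]
    have hne (i : s) : (i : ℕ) ≠ a := fun h => ha (h ▸ i.2)
    simp [φ, ι, subtypeInsertEquivOption, hne]
  funext n
  rw [← hφ, minFinsetSum.comp_equiv]

theorem minFinsetSum_smoothWeight_Icc_three (p : ℕ → ℕ) (hp : 1 ≤ p 3) (n : ℕ) :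
    minFinsetSum (smoothWeight p (Icc 3 3)) n = ∑ i ∈ range n, p 3 ^ i := by
  have hcomp : extendWeight (smoothWeight p ∅) (p 3) ∘ (Equiv.uniqueProd ℕ _).symm
      = fun i => p 3 ^ i := by
    funext i
    simp [extendWeight, smoothWeight]
  rw [minFinsetSum_smoothWeight_insert p (notMem_empty 3) (Icc_self 3).symm,
    ← minFinsetSum.comp_equiv (Equiv.uniqueProd ℕ _).symm, hcomp,
    minFinsetSum.eq_sum_range_of_monotone (pow_right_mono₀ hp)]

theorem minFinsetSum_smoothWeight_Icc_succ (p : ℕ → ℕ) {k : ℕ} (hk : 3 ≤ k) :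
    minFinsetSum (smoothWeight p (Icc 3 (k + 1)))
      = minFinsetSum (extendWeight (smoothWeight p (Icc 3 k)) (p (k + 1))) :=
  minFinsetSum_smoothWeight_insert p (by simp) (insert_Icc_right_eq_Icc_add_one (by omega))

theorem eq_geom_sum_of_eq_mul_add_one {G : ℕ → ℕ} {c : ℕ} (h0 : G 0 = 0)
    (hsucc : ∀ n, 1 ≤ n → G n = c * G (n - 1) + 1) (n : ℕ) : G n = ∑ i ∈ range n, c ^ i := by
  induction n with
  | zero => simpa using h0
  | succ n ih =>
    rw [hsucc (n + 1) (by omega), Nat.add_sub_cancel, ih, mul_sum, sum_range_succ']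
    simp [pow_succ, mul_comm]

theorem frameStewart_eq_minFinsetSum (p : ℕ → ℕ) (hp : ∀ i, 1 ≤ p i) (G1 : ℕ → ℕ → ℕ)
    (hG10 : ∀ k, G1 k 0 = 0)
    (hG13 : ∀ n, 1 ≤ n → G1 3 n = p 3 * G1 3 (n - 1) + 1)
    (hG1k : ∀ k, 4 ≤ k → ∀ n, 1 ≤ n →
      G1 k n = sInf {v | ∃ t, 1 ≤ t ∧ t ≤ n ∧ v = p k * G1 k (n - t) + G1 (k - 1) t})
    {k : ℕ} (hk : 3 ≤ k) (n : ℕ) :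
    G1 k n = minFinsetSum (smoothWeight p (Icc 3 k)) n := by
  induction k, hk using Nat.le_induction generalizing n with
  | base =>
    rw [minFinsetSum_smoothWeight_Icc_three p (hp 3)]
    exact eq_geom_sum_of_eq_mul_add_one (hG10 3) hG13 n
  | succ k hk ih =>
    induction n using Nat.strong_induction_on with
    | _ n ihn =>
    rcases Nat.eq_zero_or_pos n with rfl | hn
    · simp [hG10]
    have : Nonempty (Icc 3 k) := ⟨⟨3, by simp [hk]⟩⟩
    rw [hG1k (k + 1) (by omega) n hn, minFinsetSum_smoothWeight_Icc_succ p hk,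
      extendWeight.minFinsetSum_eq _ _ (hp _) hn, ← minFinsetSum_smoothWeight_Icc_succ p hk]
    congr 1
    ext v
    refine exists_congr fun t => and_congr_right fun ht => and_congr_right fun htn => ?_
    rw [ihn (n - t) (by omega), Nat.add_sub_cancel, ih]

theorem generalized_frame_stewart_unit_q_sum_general
    (p : ℕ → ℕ) (hp : ∀ i, 1 ≤ p i)
    (G1 : ℕ → ℕ → ℕ)
    (hG10 : ∀ k, G1 k 0 = 0)
    (hG13 : ∀ n, 1 ≤ n → G1 3 n = p 3 * G1 3 (n - 1) + 1)
    (hG1k : ∀ k, 4 ≤ k → ∀ n, 1 ≤ n →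
      G1 k n = sInf {v | ∃ t, 1 ≤ t ∧ t ≤ n ∧ v = p k * G1 k (n - t) + G1 (k - 1) t})
    (k : ℕ) (hk : 3 ≤ k)
    (u : ℕ → ℕ) (hu : IsSmoothEnum p k u)
    (n : ℕ) :
    G1 k n = ∑ j ∈ Finset.Icc 1 n, u j := by
  obtain ⟨hmono, e, he⟩ := hu
  rw [frameStewart_eq_minFinsetSum p hp G1 hG10 hG13 hG1k hk n]
  exact minFinsetSum.eq_sum_Icc_of_enum hmono e he n

/-- Theorem 1 with unit q-weights: G^1_k(n) = Σ_{j=1}^{n} u^k_j. -/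
theorem generalized_frame_stewart_unit_q_sum
    (p : ℕ → ℕ) (hp : ∀ i, 1 ≤ p i)
    (G1 : ℕ → ℕ → ℕ)
    (hG10 : ∀ k, G1 k 0 = 0)
    (hG13 : ∀ n, 1 ≤ n → G1 3 n = p 3 * G1 3 (n - 1) + 1)
    (hG1k : ∀ k, 4 ≤ k → ∀ n, 1 ≤ n →
      G1 k n = sInf {v | ∃ t, 1 ≤ t ∧ t ≤ n ∧ v = p k * G1 k (n - t) + G1 (k - 1) t})
    (k : ℕ) (hk : 3 ≤ k)
    (u : ℕ → ℕ) (hu : IsSmoothEnum p k u)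
    (n : ℕ) (hn : 1 ≤ n) :
    G1 k n = ∑ j ∈ Finset.Icc 1 n, u j :=
  generalized_frame_stewart_unit_q_sum_general p hp G1 hG10 hG13 hG1k k hk u hu n
end

section
/- Let (p_i)_{i≥3} and (q_i)_{i≥3} be sequences of positive integers and let G_k(n) be the generalized Frame-Stewart numbers. Then G_k(n) = q · Σ_{j=1}^{n} u^k_j, where q = ∏_{i=3}^{k} q_i and u^k_j is the j-th term of the nondecreasing enumeration with multiplicity of all integers ∏_{i=3}^{k} p_i^{α_i} with α_i ≥ 0. -/
/-!
Write `N(x)` for the number of exponent vectors `α` with `∏ p_i ^ α_i ≤ x`. When every `p_i ≥ 2`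
these sets are finite and the enumeration is the lower adjoint of `N`: `u_j ≤ x ↔ j ≤ N(x)`.
Splitting on whether `α_k = 0` gives `N_k(x) = N_{k-1}(x) + N_k(x / p_k)`, so `u^k` is the sorted
merge of `u^{k-1}` and `p_k • u^k`. Partial sums of a sorted sequence are `∑_{j ≤ n} A_j =
∑_x (n - a(x))⁺`, where `a` counts the terms `≤ x`; in this form the partial sums of a merge are
seen pointwise in `x` to be `min_t (∑_{j ≤ n-t} A_j + ∑_{j ≤ t} B_j)`, which is the Frame–Stewart
recursion with `q ≡ 1`, and the factor `∏ q_i` passes through the induction. A nondecreasing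
enumeration cannot exist if some `p_i = 1` and another `p_j ≥ 2` (the value `1` would occur
infinitely often before the value `p_j`); if all `p_i = 1` then `u ≡ 1` and `G_k(n) = q n`.
-/

open Finset

section Merge

variable {A B C a b : ℕ → ℕ}

theorem GaloisConnection.sum_Icc_eq_sum_range_tsub (hA : GaloisConnection A a) {n X : ℕ}
    (hX : A n ≤ X) : ∑ j ∈ Icc 1 n, A j = ∑ x ∈ range X, (n - a x) := by
  have hrow : ∀ j ∈ Icc 1 n, A j = #((range X).filter fun x => a x < j) := by
    intro j hj
    have hjX : A j ≤ X := (hA.monotone_l (mem_Icc.1 hj).2).trans hX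
    rw [← card_range (A j)]
    congr 1
    ext x
    simp only [mem_range, mem_filter, ← not_le, ← hA j x]
    omega
  have hcol : ∀ x ∈ range X, n - a x = #((Icc 1 n).filter fun j => a x < j) := by
    intro x _
    rw [← Nat.card_Ioc (a x) n]
    congr 1
    ext j
    simp only [mem_Ioc, mem_filter, mem_Icc]
    omega
  rw [sum_congr rfl hrow, sum_congr rfl hcol]
  exact sum_card_bipartiteAbove_eq_sum_card_bipartiteBelow _

theorem sum_Icc_add_sum_Icc_eq_sum_range (hA : GaloisConnection A a)
    (hB : GaloisConnection B b) {n t X : ℕ} (ht : t ≤ n) (hX : A n + B n ≤ X) :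
    ∑ j ∈ Icc 1 (n - t), A j + ∑ j ∈ Icc 1 t, B j = ∑ x ∈ range X, (n - t - a x + (t - b x)) := by
  rw [hA.sum_Icc_eq_sum_range_tsub (X := X) ((hA.monotone_l (n.sub_le t)).trans (by omega)),
    hB.sum_Icc_eq_sum_range_tsub (X := X) ((hB.monotone_l ht).trans (by omega)), sum_add_distrib]

theorem sum_Icc_le_of_galoisConnection_add (hA : GaloisConnection A a)
    (hB : GaloisConnection B b) (hC : GaloisConnection C (a + b)) {n t : ℕ} (ht : t ≤ n) :
    ∑ j ∈ Icc 1 n, C j ≤ ∑ j ∈ Icc 1 (n - t), A j + ∑ j ∈ Icc 1 t, B j := by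
  rw [sum_Icc_add_sum_Icc_eq_sum_range hA hB ht (Nat.le_add_right _ (C n)),
    hC.sum_Icc_eq_sum_range_tsub (Nat.le_add_left _ _)]
  exact sum_le_sum fun x _ => by simp only [Pi.add_apply]; omega

theorem exists_tsub_add_tsub_eq {a b : ℕ → ℕ} (ha : Monotone a) (hb : Monotone b) {n x₀ : ℕ}
    (hn : 1 ≤ n) (hx₀ : ∀ x, x₀ ≤ x ↔ n ≤ a x + b x) (hb₀ : 1 ≤ b x₀) :
    ∃ t, 1 ≤ t ∧ t ≤ n ∧ ∀ x, n - t - a x + (t - b x) = n - (a x + b x) := by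
  -- `t` is the number of terms of `B` among the first `n` terms of the merge, ties at the value
  -- `x₀` being given to `B`.
  refine ⟨max 1 (min (b x₀) (n - a (x₀ - 1))), by omega, by omega, fun x => ?_⟩
  have hn₀ := (hx₀ x₀).1 le_rfl
  have ha₀ := ha (x₀.sub_le 1)
  rcases le_or_gt x₀ x with hx | hx
  · have := ha hx
    have := hb hx
    omega
  · have hlt : ¬ n ≤ a (x₀ - 1) + b (x₀ - 1) := by rw [← hx₀]; omega
    have := ha (Nat.le_sub_one_of_lt hx)
    have := hb (Nat.le_sub_one_of_lt hx)
    have := hb (x₀.sub_le 1)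
    omega

theorem isLeast_sum_Icc_of_galoisConnection_add (hA : GaloisConnection A a)
    (hB : GaloisConnection B b) (hC : GaloisConnection C (a + b)) (hBA : B 1 ≤ A 1) {n : ℕ}
    (hn : 1 ≤ n) :
    IsLeast {v | ∃ t, 1 ≤ t ∧ t ≤ n ∧ v = ∑ j ∈ Icc 1 (n - t), A j + ∑ j ∈ Icc 1 t, B j}
      (∑ j ∈ Icc 1 n, C j) := by
  refine ⟨?_, fun _ ⟨t, _, htn, hv⟩ => hv ▸ sum_Icc_le_of_galoisConnection_add hA hB hC htn⟩
  have hb₀ : 1 ≤ b (C n) := by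
    have h1 : 1 ≤ a (C n) + b (C n) := (hC 1 (C n)).1 (hC.monotone_l hn)
    by_contra h
    exact h ((hB 1 _).1 (hBA.trans ((hA 1 _).2 (by omega))))
  obtain ⟨t, ht1, htn, ht⟩ := exists_tsub_add_tsub_eq hA.monotone_u hB.monotone_u hn (hC n) hb₀
  refine ⟨t, ht1, htn, ?_⟩
  rw [sum_Icc_add_sum_Icc_eq_sum_range hA hB htn (Nat.le_add_right _ (C n)),
    hC.sum_Icc_eq_sum_range_tsub (Nat.le_add_left _ _)]
  exact sum_congr rfl fun x _ => (ht x).symm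

end Merge

section Smooth

variable {κ : Type*} [Fintype κ] {w : κ → ℕ}

variable (w) in
noncomputable def smoothCount (x : ℕ) : ℕ := Nat.card {α : κ → ℕ // ∏ i, w i ^ α i ≤ x}

theorem finite_prod_pow_le (hw : ∀ i, 2 ≤ w i) (x : ℕ) :
    Finite {α : κ → ℕ // ∏ i, w i ^ α i ≤ x} := by
  refine Set.Finite.to_subtype ((Set.Finite.pi fun _ => Set.finite_Iic x).subset
    fun α hα i _ => ?_)
  have hpos : ∀ i, 0 < w i ^ α i := fun i => pow_pos (by linarith [hw i]) _
  calc α i ≤ 2 ^ α i := Nat.lt_two_pow_self.le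
    _ ≤ w i ^ α i := Nat.pow_le_pow_left (hw i) _
    _ ≤ ∏ i, w i ^ α i := Nat.le_of_dvd (prod_pos fun i _ => hpos i)
        (dvd_prod_of_mem _ (mem_univ i))
    _ ≤ x := hα

theorem smoothCount_mono (hw : ∀ i, 2 ≤ w i) : Monotone (smoothCount w) := fun _ y hxy =>
  have := finite_prod_pow_le hw y
  Nat.card_le_card_of_injective (Subtype.impEmbedding _ _ fun _ h => h.trans hxy)
    (Subtype.impEmbedding _ _ _).injective

theorem smoothCount_zero (hw : ∀ i, 1 ≤ w i) : smoothCount w 0 = 0 := by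
  rw [smoothCount, Nat.card_eq_zero]
  refine Or.inl ⟨fun ⟨α, hα⟩ => ?_⟩
  have : 0 < ∏ i, w i ^ α i := prod_pos fun i _ => pow_pos (hw i) _
  omega

theorem one_le_smoothCount_one (hw : ∀ i, 2 ≤ w i) : 1 ≤ smoothCount w 1 := by
  have := finite_prod_pow_le hw 1
  exact Nat.card_pos_iff.2 ⟨⟨⟨0, by simp⟩⟩, this⟩

theorem le_smoothCount_pow [Nonempty κ] (hw : ∀ i, 2 ≤ w i) (j : ℕ) :
    j ≤ smoothCount w ((∏ i, w i) ^ j) := by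
  have := finite_prod_pow_le hw ((∏ i, w i) ^ j)
  have hW : 1 ≤ ∏ i, w i := one_le_prod' fun i _ => by linarith [hw i]
  calc j = Nat.card (Fin j) := (Nat.card_eq_fintype_card.trans (Fintype.card_fin j)).symm
    _ ≤ smoothCount w ((∏ i, w i) ^ j) := by
      refine Nat.card_le_card_of_injective (fun m => ⟨fun _ => m, ?_⟩) fun m m' h => ?_
      · rw [prod_pow]; exact Nat.pow_le_pow_right hW m.2.le
      · exact Fin.ext (congrFun (congrArg Subtype.val h) (Classical.arbitrary κ))

theorem smoothCount_comp_equiv {κ' : Type*} [Fintype κ'] (e : κ' ≃ κ) (x : ℕ) :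
    smoothCount (w ∘ e) x = smoothCount w x :=
  Nat.card_congr <| (e.arrowCongr (Equiv.refl ℕ)).subtypeEquiv fun α => by
    simp [← e.prod_comp]

theorem pow_succ_mul_le_iff {c : ℕ} (hc : 0 < c) (e y x : ℕ) :
    c ^ (e + 1) * y ≤ x ↔ c ^ e * y ≤ x / c := by
  rw [Nat.le_div_iff_mul_le hc, pow_succ, mul_right_comm]

def powMulLeEquiv {T : Type*} {c : ℕ} (hc : 0 < c) (f : T → ℕ) (x : ℕ) :
    {γ : ℕ × T // c ^ γ.1 * f γ.2 ≤ x} ≃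
      {t // f t ≤ x} ⊕ {γ : ℕ × T // c ^ γ.1 * f γ.2 ≤ x / c} where
  toFun
    | ⟨(0, t), h⟩ => .inl ⟨t, by simpa using h⟩
    | ⟨(e + 1, t), h⟩ => .inr ⟨(e, t), (pow_succ_mul_le_iff hc e _ x).1 h⟩
  invFun
    | .inl ⟨t, h⟩ => ⟨(0, t), by simpa using h⟩
    | .inr ⟨(e, t), h⟩ => ⟨(e + 1, t), (pow_succ_mul_le_iff hc e _ x).2 h⟩
  left_inv := by rintro ⟨⟨_ | e, t⟩, h⟩ <;> rfl
  right_inv := by rintro (⟨t, h⟩ | ⟨⟨e, t⟩, h⟩) <;> rfl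

theorem natCard_pow_mul_le_eq_add {T : Type*} {c : ℕ} (hc : 0 < c) (f : T → ℕ) (x : ℕ)
    [Finite {γ : ℕ × T // c ^ γ.1 * f γ.2 ≤ x}] :
    Nat.card {γ : ℕ × T // c ^ γ.1 * f γ.2 ≤ x} =
      Nat.card {t // f t ≤ x} + Nat.card {γ : ℕ × T // c ^ γ.1 * f γ.2 ≤ x / c} := by
  have e := powMulLeEquiv hc f x
  have := Finite.of_injective _ (e.symm.injective.comp Sum.inl_injective)
  have := Finite.of_injective _ (e.symm.injective.comp Sum.inr_injective)
  rw [Nat.card_congr e, Nat.card_sum]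

theorem smoothCount_option {w : Option κ → ℕ} (hw : ∀ i, 2 ≤ w i) (x : ℕ) :
    smoothCount w x = smoothCount (w ∘ some) x + smoothCount w (x / w none) := by
  have split (y : ℕ) : {α : Option κ → ℕ // ∏ i, w i ^ α i ≤ y} ≃
      {γ : ℕ × (κ → ℕ) // w none ^ γ.1 * ∏ i, (w ∘ some) i ^ γ.2 i ≤ y} :=
    Equiv.piOptionEquivProd.subtypeEquiv fun α => by simp [Fintype.prod_option]
  have := finite_prod_pow_le hw x
  have := Finite.of_equiv _ (split x)
  unfold smoothCount
  rw [Nat.card_congr (split x), Nat.card_congr (split _)]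
  exact natCard_pow_mul_le_eq_add (by linarith [hw none])
    (fun β : κ → ℕ => ∏ i, (w ∘ some) i ^ β i) x

theorem smoothCount_insert {ι : Type*} [DecidableEq ι] {p : ι → ℕ} {s : Finset ι} {a : ι}
    (ha : a ∉ s) (hp : ∀ i ∈ insert a s, 2 ≤ p i) (x : ℕ) :
    smoothCount (fun i : ↥(insert a s) => p i) x =
      smoothCount (fun i : ↥s => p i) x +
        smoothCount (fun i : ↥(insert a s) => p i) (x / p a) := by
  have h := smoothCount_option
    (w := (fun i : ↥(insert a s) => p i) ∘ (subtypeInsertEquivOption ha).symm)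
    (fun i => hp _ (Subtype.prop _)) x
  rwa [smoothCount_comp_equiv, smoothCount_comp_equiv] at h

variable (w) in
noncomputable def smoothEnum (j : ℕ) : ℕ := sInf {x | j ≤ smoothCount w x}

theorem gc_smoothEnum_smoothCount [Nonempty κ] (hw : ∀ i, 2 ≤ w i) :
    GaloisConnection (smoothEnum w) (smoothCount w) := fun j _ =>
  ⟨fun h => le_trans (Nat.sInf_mem (s := {x | j ≤ smoothCount w x})
    ⟨_, le_smoothCount_pow hw j⟩) (smoothCount_mono hw h), fun h => Nat.sInf_le h⟩

theorem smoothEnum_one [Nonempty κ] (hw : ∀ i, 2 ≤ w i) : smoothEnum w 1 = 1 := by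
  have gc := gc_smoothEnum_smoothCount hw
  refine le_antisymm ((gc 1 1).2 (one_le_smoothCount_one hw))
    (Nat.one_le_iff_ne_zero.2 fun h => ?_)
  have := (gc 1 0).1 h.le
  rw [smoothCount_zero fun i => (hw i).trans' one_le_two] at this
  omega

theorem lt_natCard_iff_of_monotone {T : Type*} (f : T → ℕ) (e : ℕ ≃ T)
    (hmono : Monotone (f ∘ e)) {x : ℕ} [Finite {t // f t ≤ x}] (m : ℕ) :
    f (e m) ≤ x ↔ m < Nat.card {t // f t ≤ x} := by
  let e' : {i // f (e i) ≤ x} ≃ {t // f t ≤ x} := e.subtypeEquiv fun _ => Iff.rfl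
  have : Finite {i // f (e i) ≤ x} := Finite.of_equiv _ e'.symm
  rw [← Nat.card_congr e']
  constructor
  · intro h
    calc m < Nat.card (Fin (m + 1)) := by simp
      _ ≤ Nat.card {i // f (e i) ≤ x} :=
        Nat.card_le_card_of_injective (fun i => ⟨i, (hmono (Fin.is_le i)).trans h⟩)
          fun i i' h => Fin.ext (congrArg Subtype.val h)
  · intro h
    by_contra hx
    have : Nat.card {i // f (e i) ≤ x} ≤ Nat.card (Fin m) :=
      Nat.card_le_card_of_injective
        (fun i => ⟨i.1, lt_of_not_ge fun hmi => hx ((hmono hmi).trans i.2)⟩)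
        fun i i' h => Subtype.ext (congrArg Fin.val h)
    rw [Nat.card_fin] at this
    omega

theorem smoothEnum_succ_of_equiv [Nonempty κ] (hw : ∀ i, 2 ≤ w i) (e : ℕ ≃ (κ → ℕ))
    (hmono : Monotone fun m => ∏ i, w i ^ e m i) (m : ℕ) :
    smoothEnum w (m + 1) = ∏ i, w i ^ e m i := by
  refine eq_of_forall_ge_iff fun x => ?_
  have := finite_prod_pow_le hw x
  rw [gc_smoothEnum_smoothCount hw, Nat.add_one_le_iff]
  exact (lt_natCard_iff_of_monotone (fun α : κ → ℕ => ∏ i, w i ^ α i) e hmono m).symm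

theorem smoothEnum_succ_of_unique [Unique κ] (hw : 2 ≤ w default) (m : ℕ) :
    smoothEnum w (m + 1) = w default ^ m := by
  have hw' : ∀ i, 2 ≤ w i := fun i => Unique.eq_default i ▸ hw
  rw [smoothEnum_succ_of_equiv hw' (Equiv.funUnique κ ℕ).symm, Fintype.prod_unique]
  · rfl
  · intro a b hab
    simpa using Nat.pow_le_pow_right (hw.trans' one_le_two) hab

end Smooth

theorem isLeast_sum_smoothEnum_insert {ι : Type*} [DecidableEq ι] {p : ι → ℕ} {s : Finset ι}
    {a : ι} (ha : a ∉ s) (hs : s.Nonempty) (hp : ∀ i ∈ insert a s, 2 ≤ p i) {n : ℕ} (hn : 1 ≤ n) :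
    IsLeast {v | ∃ t, 1 ≤ t ∧ t ≤ n ∧
        v = p a * ∑ j ∈ Icc 1 (n - t), smoothEnum (fun i : ↥(insert a s) => p i) j +
          ∑ j ∈ Icc 1 t, smoothEnum (fun i : ↥s => p i) j}
      (∑ j ∈ Icc 1 n, smoothEnum (fun i : ↥(insert a s) => p i) j) := by
  have : Nonempty ↥s := hs.to_subtype
  have : Nonempty ↥(insert a s) := ⟨⟨a, mem_insert_self a s⟩⟩
  have hw : ∀ i : ↥s, 2 ≤ p i := fun i => hp i (mem_insert_of_mem i.2)
  have hw' : ∀ i : ↥(insert a s), 2 ≤ p i := fun i => hp i i.2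
  have hpa : 0 < p a := by linarith [hp a (mem_insert_self a s)]
  have hC := gc_smoothEnum_smoothCount hw'
  have hA : GaloisConnection (fun j => p a * smoothEnum (fun i : ↥(insert a s) => p i) j)
      (fun x => smoothCount (fun i : ↥(insert a s) => p i) (x / p a)) := fun j x => by
    dsimp only
    rw [mul_comm, ← Nat.le_div_iff_mul_le hpa]
    exact hC j _
  have hC' : GaloisConnection (smoothEnum fun i : ↥(insert a s) => p i)
      ((fun x => smoothCount (fun i : ↥(insert a s) => p i) (x / p a)) +
        smoothCount fun i : ↥s => p i) := by
    convert hC using 1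
    funext x
    exact (add_comm _ _).trans (smoothCount_insert ha hp x).symm
  have hBA : smoothEnum (fun i : ↥s => p i) 1 ≤
      p a * smoothEnum (fun i : ↥(insert a s) => p i) 1 := by
    rw [smoothEnum_one hw, smoothEnum_one hw']
    omega
  simpa only [mul_sum] using
    isLeast_sum_Icc_of_galoisConnection_add hA (gc_smoothEnum_smoothCount hw) hC' hBA hn

theorem smoothEnum_Icc_self_succ {p : ℕ → ℕ} {a : ℕ} (hp : 2 ≤ p a) (m : ℕ) :
    smoothEnum (fun i : ↥(Icc a a) => p i) (m + 1) = p a ^ m := by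
  rw [Icc_self]
  exact smoothEnum_succ_of_unique (w := fun i : ↥({a} : Finset ℕ) => p i) hp m

namespace IsSmoothEnum

variable {p : ℕ → ℕ} {k : ℕ} {u : ℕ → ℕ}

theorem monotone_succ (hu : IsSmoothEnum p k u) : Monotone fun m => u (m + 1) :=
  monotone_nat_of_le_succ fun m => hu.1 (m + 1) (Nat.le_add_left 1 m)

theorem eq_smoothEnum (hu : IsSmoothEnum p k u) (hk : 3 ≤ k) (hp : ∀ i ∈ Icc 3 k, 2 ≤ p i)
    {j : ℕ} (hj : 1 ≤ j) : u j = smoothEnum (fun i : ↥(Icc 3 k) => p i) j := by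
  obtain ⟨e, he⟩ := hu.2
  obtain ⟨m, rfl⟩ := Nat.exists_eq_add_of_le' hj
  have : Nonempty ↥(Icc 3 k) := ⟨⟨3, mem_Icc.2 ⟨le_rfl, hk⟩⟩⟩
  let shift : ℕ ≃ {j : ℕ // 1 ≤ j} :=
    ⟨fun m => ⟨m + 1, m.succ_pos⟩, fun j => j.1 - 1, fun _ => rfl,
      fun j => Subtype.ext (Nat.sub_add_cancel j.2)⟩
  have hprod (m : ℕ) : u (m + 1) = ∏ i : ↥(Icc 3 k), p i ^ (shift.trans e) m i := he (shift m)
  rw [smoothEnum_succ_of_equiv (w := fun i : ↥(Icc 3 k) => p i) (fun i => hp i i.2)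
    (shift.trans e) _ m, hprod]
  simpa only [← hprod] using hu.monotone_succ

theorem eq_one (hu : IsSmoothEnum p k u) (hp : ∀ i ∈ Icc 3 k, p i = 1) {j : ℕ} (hj : 1 ≤ j) :
    u j = 1 := by
  obtain ⟨e, he⟩ := hu.2
  rw [he ⟨j, hj⟩]
  exact prod_eq_one fun i _ => by rw [hp i i.2, one_pow]

theorem eq_one_or_two_le (hu : IsSmoothEnum p k u) (hp : ∀ i ∈ Icc 3 k, 1 ≤ p i) :
    (∀ i ∈ Icc 3 k, p i = 1) ∨ ∀ i ∈ Icc 3 k, 2 ≤ p i := by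
  by_contra! ⟨⟨i₀, hi₀, hpi₀⟩, ⟨i, hi, hpi⟩⟩
  obtain ⟨e, he⟩ := hu.2
  have hsingle (i : ↥(Icc 3 k)) (m : ℕ) : u (e.symm (Pi.single i m)) = p i ^ m := by
    rw [he, Equiv.apply_symm_apply, Fintype.prod_eq_single i fun i' hi' => by simp [hi']]
    simp
  have hpi1 : p i = 1 := by linarith [hp i hi]
  set j₀ := e.symm (Pi.single ⟨i₀, hi₀⟩ 1)
  set f := fun m => e.symm (Pi.single ⟨i, hi⟩ m)
  have hlt (m : ℕ) : (f m).1 < j₀.1 := by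
    by_contra! h
    have := hu.monotone_succ (Nat.sub_le_sub_right h 1)
    simp only [Nat.sub_add_cancel j₀.2, Nat.sub_add_cancel (f m).2, f, j₀, hsingle, hpi1, one_pow,
      pow_one] at this
    have := hp i₀ hi₀
    omega
  refine not_injective_infinite_finite (fun m => (⟨(f m).1, hlt m⟩ : Fin j₀.1)) fun m m' h => ?_
  exact Pi.single_injective _ (e.symm.injective (Subtype.ext (congrArg Fin.val h)))

end IsSmoothEnum

theorem sum_Icc_succ_eq_mul_sum_Icc_add_one {f : ℕ → ℕ} {c : ℕ} (hf : ∀ m, f (m + 1) = c ^ m)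
    (n : ℕ) : ∑ j ∈ Icc 1 (n + 1), f j = c * ∑ j ∈ Icc 1 n, f j + 1 := by
  induction n with
  | zero => simp [hf 0]
  | succ n ih =>
    rw [sum_Icc_succ_top (b := n + 1) (by omega), sum_Icc_succ_top (b := n) (by omega)] at *
    rw [hf, hf, pow_succ'] at *
    linarith

section FrameStewart

variable {p q : ℕ → ℕ} {G : ℕ → ℕ → ℕ} {K : ℕ}
  (hG0 : ∀ k, G k 0 = 0)
  (hG3 : ∀ n, 1 ≤ n → G 3 n = p 3 * G 3 (n - 1) + q 3)
  (hGk : ∀ k, 4 ≤ k → k ≤ K → ∀ n, 1 ≤ n →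
    G k n = sInf {v | ∃ t, 1 ≤ t ∧ t ≤ n ∧ v = p k * G k (n - t) + q k * G (k - 1) t})
include hG0 hG3 hGk

theorem frameStewart_eq_prod_mul {S : ℕ → ℕ → ℕ} (hS0 : ∀ k, S k 0 = 0)
    (hS3 : ∀ n, 1 ≤ n → S 3 n = p 3 * S 3 (n - 1) + 1)
    (hSk : ∀ k, 4 ≤ k → k ≤ K → ∀ n, 1 ≤ n →
      IsLeast {v | ∃ t, 1 ≤ t ∧ t ≤ n ∧ v = p k * S k (n - t) + S (k - 1) t} (S k n))
    {k : ℕ} (hk : 3 ≤ k) (hkK : k ≤ K) (n : ℕ) :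
    G k n = (∏ i ∈ Icc 3 k, q i) * S k n := by
  induction k, hk using Nat.le_induction generalizing n with
  | base =>
    induction n with
    | zero => simp [hG0, hS0]
    | succ n ih =>
      rw [hG3 _ (by omega), hS3 _ (by omega), Nat.add_sub_cancel, ih, Icc_self, prod_singleton]
      ring
  | succ k hk ih =>
    induction n using Nat.strong_induction_on with
    | _ n ihn =>
    rcases n.eq_zero_or_pos with rfl | hn
    · simp [hG0, hS0]
    have hval (t : ℕ) (ht : 1 ≤ t) (htn : t ≤ n) :
        p (k + 1) * G (k + 1) (n - t) + q (k + 1) * G k t =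
          (∏ i ∈ Icc 3 (k + 1), q i) * (p (k + 1) * S (k + 1) (n - t) + S k t) := by
      rw [ihn _ (by omega), ih (by omega), prod_Icc_succ_top (by omega)]
      ring
    have hS := hSk (k + 1) (by omega) hkK n hn
    rw [hGk (k + 1) (by omega) hkK n hn]
    simp only [Nat.add_sub_cancel] at hS ⊢
    refine IsLeast.csInf_eq ⟨?_, ?_⟩
    · obtain ⟨t, ht, htn, hSn⟩ := hS.1
      exact ⟨t, ht, htn, by rw [hval t ht htn, hSn]⟩
    · rintro _ ⟨t, ht, htn, rfl⟩
      rw [hval t ht htn]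
      exact Nat.mul_le_mul_left _ (hS.2 ⟨t, ht, htn, rfl⟩)

theorem frameStewart_eq_prod_mul_of_eq_one (hp : ∀ i ∈ Icc 3 K, p i = 1) {k : ℕ} (hk : 3 ≤ k)
    (hkK : k ≤ K) (n : ℕ) : G k n = (∏ i ∈ Icc 3 k, q i) * n := by
  refine frameStewart_eq_prod_mul (S := fun _ n => n) hG0 hG3 hGk (fun _ => rfl)
    (fun n hn => ?_) (fun k hk hkK n hn => ⟨⟨n, hn, le_rfl, ?_⟩, ?_⟩) hk hkK n
  · rw [hp 3 (mem_Icc.2 ⟨le_rfl, by omega⟩)]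
    omega
  · rw [hp k (mem_Icc.2 ⟨by omega, hkK⟩)]
    omega
  · rintro _ ⟨t, -, htn, rfl⟩
    rw [hp k (mem_Icc.2 ⟨by omega, hkK⟩)]
    omega

theorem frameStewart_eq_prod_mul_sum_smoothEnum (hp : ∀ i ∈ Icc 3 K, 2 ≤ p i) {k : ℕ}
    (hk : 3 ≤ k) (hkK : k ≤ K) (n : ℕ) :
    G k n = (∏ i ∈ Icc 3 k, q i) * ∑ j ∈ Icc 1 n, smoothEnum (fun i : ↥(Icc 3 k) => p i) j := by
  refine frameStewart_eq_prod_mul hG0 hG3 hGk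
    (S := fun k n => ∑ j ∈ Icc 1 n, smoothEnum (fun i : ↥(Icc 3 k) => p i) j)
    (fun _ => by simp) (fun n hn => ?_) (fun k hk hkK n hn => ?_) hk hkK n
  · obtain ⟨m, rfl⟩ := Nat.exists_eq_add_of_le' hn
    exact sum_Icc_succ_eq_mul_sum_Icc_add_one
      (smoothEnum_Icc_self_succ (hp 3 (mem_Icc.2 ⟨le_rfl, by omega⟩))) m
  · obtain ⟨m, rfl⟩ := Nat.exists_eq_add_of_le' (show 1 ≤ k by omega)
    rw [Nat.add_sub_cancel, ← insert_Icc_right_eq_Icc_add_one (by omega)]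
    exact isLeast_sum_smoothEnum_insert (by simp) (nonempty_Icc.2 (by omega))
      (fun i hi => hp i (by rw [insert_Icc_right_eq_Icc_add_one (by omega)] at hi; exact
        Icc_subset_Icc_right hkK hi)) hn

end FrameStewart

theorem generalized_frame_stewart_main_general
    (p q : ℕ → ℕ) (hp : ∀ i, 1 ≤ p i)
    (G : ℕ → ℕ → ℕ)
    (hG0 : ∀ k, G k 0 = 0)
    (hG3 : ∀ n, 1 ≤ n → G 3 n = p 3 * G 3 (n - 1) + q 3)
    (hGk : ∀ k, 4 ≤ k → ∀ n, 1 ≤ n →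
      G k n = sInf {v | ∃ t, 1 ≤ t ∧ t ≤ n ∧ v = p k * G k (n - t) + q k * G (k - 1) t})
    (k : ℕ) (hk : 3 ≤ k)
    (u : ℕ → ℕ) (hu : IsSmoothEnum p k u)
    (n : ℕ) :
    G k n = (∏ i ∈ Finset.Icc 3 k, q i) * ∑ j ∈ Finset.Icc 1 n, u j := by
  rcases hu.eq_one_or_two_le fun i _ => hp i with hp1 | hp2
  · rw [sum_congr rfl fun j hj => hu.eq_one hp1 (mem_Icc.1 hj).1, sum_const, Nat.card_Icc,
      smul_eq_mul, mul_one, Nat.add_sub_cancel]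
    exact frameStewart_eq_prod_mul_of_eq_one hG0 hG3 (fun k hk _ => hGk k hk) hp1 hk le_rfl n
  · rw [sum_congr rfl fun j hj => hu.eq_smoothEnum hk hp2 (mem_Icc.1 hj).1]
    exact frameStewart_eq_prod_mul_sum_smoothEnum hG0 hG3 (fun k hk _ => hGk k hk) hp2 hk le_rfl n

/-- Theorem 1: G_k(n) = (∏_{i=3}^k q_i) · Σ_{j=1}^{n} u^k_j. -/
theorem generalized_frame_stewart_main
    (p q : ℕ → ℕ) (hp : ∀ i, 1 ≤ p i) (hq : ∀ i, 1 ≤ q i)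
    (G : ℕ → ℕ → ℕ)
    (hG0 : ∀ k, G k 0 = 0)
    (hG3 : ∀ n, 1 ≤ n → G 3 n = p 3 * G 3 (n - 1) + q 3)
    (hGk : ∀ k, 4 ≤ k → ∀ n, 1 ≤ n →
      G k n = sInf {v | ∃ t, 1 ≤ t ∧ t ≤ n ∧ v = p k * G k (n - t) + q k * G (k - 1) t})
    (k : ℕ) (hk : 3 ≤ k)
    (u : ℕ → ℕ) (hu : IsSmoothEnum p k u)
    (n : ℕ) (hn : 1 ≤ n) :
    G k n = (∏ i ∈ Finset.Icc 3 k, q i) * ∑ j ∈ Finset.Icc 1 n, u j :=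
  generalized_frame_stewart_main_general p q hp G hG0 hG3 hGk k hk u hu n
end

section
/- If some p_{i_0} = 1 with 3 ≤ i_0 ≤ k (and the other p_i are arbitrary positive integers), then the generalized Frame-Stewart number with unit q-weights satisfies G^1_k(n) = n for all n ≥ 0. -/
/-!
Both bounds come straight from the recursion. Since every `p i ≥ 1` and a split `n = (n - t) + t`
costs at least `G k (n - t) + G (k - 1) t`, induction gives `n ≤ G k n`. Conversely, the split
`t = n` shows that `G k n` is non-increasing in `k`, and at the index `i₀` with `p i₀ = 1` the
split `t = 1` costs `G i₀ (n - 1) + G (i₀ - 1) 1 = G i₀ (n - 1) + 1`, so `G k n ≤ G i₀ n ≤ n`.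
-/

structure IsGenFrameStewart (p : ℕ → ℕ) (G : ℕ → ℕ → ℕ) : Prop where
  zero : ∀ k, G k 0 = 0
  three : ∀ n, 1 ≤ n → G 3 n = p 3 * G 3 (n - 1) + 1
  split : ∀ k, 4 ≤ k → ∀ n, 1 ≤ n →
    G k n = sInf {v | ∃ t, 1 ≤ t ∧ t ≤ n ∧ v = p k * G k (n - t) + G (k - 1) t}

namespace IsGenFrameStewart

variable {p : ℕ → ℕ} {G : ℕ → ℕ → ℕ}

theorem le_split (hG : IsGenFrameStewart p G) {k n t : ℕ} (hk : 4 ≤ k) (ht : 1 ≤ t)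
    (htn : t ≤ n) : G k n ≤ p k * G k (n - t) + G (k - 1) t := by
  rw [hG.split k hk n (ht.trans htn)]
  exact Nat.sInf_le ⟨t, ht, htn, rfl⟩

theorem exists_eq_split (hG : IsGenFrameStewart p G) {k n : ℕ} (hk : 4 ≤ k) (hn : 1 ≤ n) :
    ∃ t, 1 ≤ t ∧ t ≤ n ∧ G k n = p k * G k (n - t) + G (k - 1) t := by
  rw [hG.split k hk n hn]
  exact Nat.sInf_mem (s := {v | ∃ t, 1 ≤ t ∧ t ≤ n ∧ v = p k * G k (n - t) + G (k - 1) t})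
    ⟨_, n, hn, le_rfl, rfl⟩

theorem self_le (hG : IsGenFrameStewart p G) (hp : ∀ i, 1 ≤ p i) {k : ℕ} (hk : 3 ≤ k)
    (n : ℕ) : n ≤ G k n := by
  induction k, hk using Nat.le_induction generalizing n with
  | base =>
    induction n with
    | zero => exact Nat.zero_le _
    | succ n ih =>
      rw [hG.three (n + 1) n.succ_pos, Nat.add_sub_cancel]
      exact Nat.succ_le_succ (ih.trans (Nat.le_mul_of_pos_left _ (hp 3)))
  | succ k hk ihk =>
    induction n using Nat.strong_induction_on with
    | _ n ih =>
      rcases Nat.eq_zero_or_pos n with rfl | hn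
      · exact Nat.zero_le _
      obtain ⟨t, ht, htn, heq⟩ := hG.exists_eq_split (by omega : 4 ≤ k + 1) hn
      calc n = (n - t) + t := by omega
        _ ≤ p (k + 1) * G (k + 1) (n - t) + G k t :=
          Nat.add_le_add ((ih (n - t) (by omega)).trans (Nat.le_mul_of_pos_left _ (hp _)))
            (ihk t)
        _ = G (k + 1) n := by rw [heq, Nat.add_sub_cancel]

theorem apply_one (hG : IsGenFrameStewart p G) {k : ℕ} (hk : 3 ≤ k) : G k 1 = 1 := by
  induction k, hk using Nat.le_induction with
  | base => simp [hG.three 1 le_rfl, hG.zero]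
  | succ k hk ih =>
    obtain ⟨t, ht, ht1, heq⟩ := hG.exists_eq_split (by omega : 4 ≤ k + 1) le_rfl
    obtain rfl : t = 1 := by omega
    simpa [hG.zero, ih] using heq

theorem le_pred (hG : IsGenFrameStewart p G) {k : ℕ} (hk : 4 ≤ k) (n : ℕ) :
    G k n ≤ G (k - 1) n := by
  rcases Nat.eq_zero_or_pos n with rfl | hn
  · simp [hG.zero]
  simpa [hG.zero] using hG.le_split hk hn le_rfl

theorem le_of_le (hG : IsGenFrameStewart p G) {i k : ℕ} (hi : 3 ≤ i) (hik : i ≤ k) (n : ℕ) :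
    G k n ≤ G i n := by
  induction k, hik using Nat.le_induction with
  | base => exact le_rfl
  | succ k hik ih => exact (hG.le_pred (by omega) n).trans ih

theorem le_self_of_eq_one (hG : IsGenFrameStewart p G) {i : ℕ} (hi : 3 ≤ i) (hpi : p i = 1)
    (n : ℕ) : G i n ≤ n := by
  induction n with
  | zero => simp [hG.zero]
  | succ n ih =>
    rcases hi.eq_or_lt with rfl | hi
    · rw [hG.three (n + 1) n.succ_pos, Nat.add_sub_cancel, hpi, one_mul]
      exact Nat.succ_le_succ ih
    · calc G i (n + 1) ≤ p i * G i (n + 1 - 1) + G (i - 1) 1 :=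
            hG.le_split hi le_rfl (by omega)
        _ = G i n + 1 := by rw [hpi, one_mul, Nat.add_sub_cancel, hG.apply_one (by omega)]
        _ ≤ n + 1 := Nat.succ_le_succ ih

end IsGenFrameStewart

/-- If some p_{i₀} = 1 with 3 ≤ i₀ ≤ k, then G^1_k(n) = n for all n ≥ 0. -/
theorem generalized_frame_stewart_some_p_one
    (p : ℕ → ℕ) (hp : ∀ i, 1 ≤ p i)
    (k : ℕ) (hk : 3 ≤ k)
    (i₀ : ℕ) (hi₀ : 3 ≤ i₀) (hi₀k : i₀ ≤ k) (hpi₀ : p i₀ = 1)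
    (G1 : ℕ → ℕ → ℕ)
    (hG10 : ∀ k', G1 k' 0 = 0)
    (hG13 : ∀ n, 1 ≤ n → G1 3 n = p 3 * G1 3 (n - 1) + 1)
    (hG1k : ∀ k', 4 ≤ k' → ∀ n, 1 ≤ n →
      G1 k' n = sInf {v | ∃ t, 1 ≤ t ∧ t ≤ n ∧ v = p k' * G1 k' (n - t) + G1 (k' - 1) t})
    (n : ℕ) :
    G1 k n = n := by
  have hG : IsGenFrameStewart p G1 := ⟨hG10, hG13, hG1k⟩
  exact le_antisymm ((hG.le_of_le hi₀ hi₀k n).trans (hG.le_self_of_eq_one hi₀ hpi₀ n))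
    (hG.self_le hp hk n)
end

section
/- For k ≥ 2, define H_{k+1}(n) as the generalized Frame-Stewart number with (p_3, q_3) = (3, 2) and (p_i, q_i) = (2, 1) for 4 ≤ i ≤ k+1. Then H_{k+1}(n) is an upper bound on the minimum number of moves needed to transfer n disks from one leaf to another leaf in the Tower of Hanoi problem on the star graph S_k (one center vertex connected to k leaves). -/
/-- One legal move of the Tower of Hanoi on a graph with adjacency `adj`. -/
def HanoiMove {α : Type*} (adj : α → α → Prop) {n : ℕ} (c c' : Fin n → α) : Prop :=
  ∃ d : Fin n, adj (c d) (c' d) ∧ (∀ e, e ≠ d → c e = c' e) ∧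
    ∀ e, e < d → c e ≠ c d ∧ c e ≠ c' d

/-- Configuration `c₁` is reachable from `c₀` in exactly `m` moves. -/
def HanoiReach {α : Type*} (adj : α → α → Prop) {n : ℕ} (c₀ c₁ : Fin n → α) (m : ℕ) : Prop :=
  ∃ f : ℕ → Fin n → α, f 0 = c₀ ∧ f m = c₁ ∧ ∀ i < m, HanoiMove adj (f i) (f (i + 1))

/-- Adjacency of the star graph S_k on vertices Fin (k+1): vertex 0 is the center,
connected to each of the k leaves. -/
def StarAdj (k : ℕ) (x y : Fin (k + 1)) : Prop :=
  (x = 0 ∧ y ≠ 0) ∨ (y = 0 ∧ x ≠ 0)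

/-! Induct on the number of leaves. With two leaves `a, b` the star with center `c` is the path
`a – c – b`, and the classical recursion (the `n - 1` smallest disks to `b`, the largest to `c`,
the small ones back to `a`, the largest to `b`, the small ones to `b`) takes `3 H₃(n - 1) + 2`
moves. With more leaves, take `t` attaining the minimum that defines `H`, and a spare leaf
`ℓ ∉ {a, b}`: park the `n - t` smallest disks on `ℓ`, move the `t` largest from `a` to `b` on the
star without `ℓ`, where the parked disks are never in the way, and bring the small disks from `ℓ`
to `b`, in `2 H_{k+1}(n - t) + H_k(t)` moves in total. -/

variable {α : Type*} {adj adj' : α → α → Prop}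

section Moves

variable {n : ℕ} {c₀ c₁ : Fin n → α}

theorem HanoiMove.mono (hle : ∀ x y, adj x y → adj' x y) (h : HanoiMove adj c₀ c₁) :
    HanoiMove adj' c₀ c₁ :=
  let ⟨d, hd, hfix, hfree⟩ := h
  ⟨d, hle _ _ hd, hfix, hfree⟩

theorem hanoiMove_single {x y : α} (h : adj x y) :
    HanoiMove adj (fun _ : Fin 1 => x) (fun _ => y) :=
  ⟨0, h, fun e he => absurd (Subsingleton.elim e 0) he, fun e he => absurd he (Fin.not_lt_zero e)⟩

-- Disk `0` is the smallest, so in `Fin.append a b` the tuple `a` places the smaller disks.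
theorem HanoiMove.append_right {t : ℕ} (b : Fin t → α) (h : HanoiMove adj c₀ c₁) :
    HanoiMove adj (Fin.append c₀ b) (Fin.append c₁ b) := by
  obtain ⟨d, hd, hfix, hfree⟩ := h
  refine ⟨Fin.castAdd t d, by simpa using hd, fun e he => ?_, fun e he => ?_⟩
  · induction e using Fin.addCases with
    | left e => simpa using hfix e (by rintro rfl; exact he rfl)
    | right e => simp
  · induction e using Fin.addCases with
    | left e => simpa using hfree e he
    | right e => exact absurd he (by simp [Fin.lt_def]; omega)

theorem HanoiMove.append_left {t : ℕ} (a : Fin t → α) (ha : ∀ e x y, adj x y → a e ≠ x ∧ a e ≠ y)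
    (h : HanoiMove adj c₀ c₁) : HanoiMove adj (Fin.append a c₀) (Fin.append a c₁) := by
  obtain ⟨d, hd, hfix, hfree⟩ := h
  refine ⟨Fin.natAdd t d, by simpa using hd, fun e he => ?_, fun e he => ?_⟩
  · induction e using Fin.addCases with
    | left e => simp
    | right e => simpa using hfix e (by rintro rfl; exact he rfl)
  · induction e using Fin.addCases with
    | left e => simpa using ha e _ _ hd
    | right e => simpa using hfree e ((Fin.natAdd_lt_natAdd_iff t).1 he)

theorem Fin.append_const {j t : ℕ} (x : α) :
    Fin.append (fun _ : Fin j => x) (fun _ : Fin t => x) = fun _ => x := by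
  ext i
  induction i using Fin.addCases <;> simp

theorem hanoiMove_last {j : ℕ} {x y z : α} (hxy : adj x y) (hzx : z ≠ x) (hzy : z ≠ y) :
    HanoiMove adj (Fin.append (fun _ : Fin j => z) fun _ : Fin 1 => x)
      (Fin.append (fun _ => z) fun _ => y) :=
  ((hanoiMove_single (adj := fun u v => u = x ∧ v = y) ⟨rfl, rfl⟩).append_left _
    fun _ _ _ ⟨hu, hv⟩ => hu ▸ hv ▸ ⟨hzx, hzy⟩).mono fun _ _ ⟨hu, hv⟩ => hu ▸ hv ▸ hxy

end Moves

section Reach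

variable {n m m₁ m₂ : ℕ} {c₀ c₁ c₂ : Fin n → α}

theorem HanoiReach.refl (c : Fin n → α) : HanoiReach adj c c 0 :=
  ⟨fun _ => c, rfl, rfl, fun _ hi => absurd hi (Nat.not_lt_zero _)⟩

theorem hanoiReach_fin_zero (c₀ c₁ : Fin 0 → α) : HanoiReach adj c₀ c₁ 0 :=
  Subsingleton.elim c₀ c₁ ▸ .refl c₀

theorem HanoiMove.hanoiReach (h : HanoiMove adj c₀ c₁) : HanoiReach adj c₀ c₁ 1 :=
  ⟨fun i => if i = 0 then c₀ else c₁, rfl, rfl, fun i hi => by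
    obtain rfl : i = 0 := by omega
    simpa using h⟩

theorem HanoiReach.trans (h₁ : HanoiReach adj c₀ c₁ m₁) (h₂ : HanoiReach adj c₁ c₂ m₂) :
    HanoiReach adj c₀ c₂ (m₁ + m₂) := by
  obtain ⟨f, hf0, hf1, hf⟩ := h₁
  obtain ⟨g, hg0, hg1, hg⟩ := h₂
  have hglue : ∀ i, m₁ ≤ i → (if i ≤ m₁ then f i else g (i - m₁)) = g (i - m₁) := by
    intro i hi
    split_ifs with h
    · obtain rfl : i = m₁ := le_antisymm h hi
      simp [hf1, hg0]
    · rfl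
  refine ⟨fun i => if i ≤ m₁ then f i else g (i - m₁), by simp [hf0], ?_, fun i hi => ?_⟩
  · dsimp only
    rw [hglue _ (Nat.le_add_right _ _), Nat.add_sub_cancel_left, hg1]
  · by_cases hi₁ : i < m₁
    · simpa [hi₁.le, Nat.succ_le_of_lt hi₁] using hf i hi₁
    · simp only [hglue i (by omega), hglue (i + 1) (by omega)]
      simpa [Nat.sub_add_comm (not_lt.1 hi₁)] using hg (i - m₁) (by omega)

theorem HanoiReach.map {n' : ℕ} {F : (Fin n → α) → Fin n' → α}
    (hF : ∀ c c', HanoiMove adj c c' → HanoiMove adj' (F c) (F c'))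
    (h : HanoiReach adj c₀ c₁ m) : HanoiReach adj' (F c₀) (F c₁) m :=
  let ⟨f, hf0, hf1, hf⟩ := h
  ⟨fun i => F (f i), congrArg F hf0, congrArg F hf1, fun i hi => hF _ _ (hf i hi)⟩

theorem HanoiReach.mono (hle : ∀ x y, adj x y → adj' x y) (h : HanoiReach adj c₀ c₁ m) :
    HanoiReach adj' c₀ c₁ m :=
  h.map (F := id) fun _ _ => HanoiMove.mono hle

theorem HanoiReach.append_right {t : ℕ} (b : Fin t → α) (h : HanoiReach adj c₀ c₁ m) :
    HanoiReach adj (Fin.append c₀ b) (Fin.append c₁ b) m :=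
  h.map fun _ _ => HanoiMove.append_right b

theorem HanoiReach.append_left {t : ℕ} (a : Fin t → α)
    (ha : ∀ e x y, adj x y → a e ≠ x ∧ a e ≠ y) (h : HanoiReach adj c₀ c₁ m) :
    HanoiReach adj (Fin.append a c₀) (Fin.append a c₁) m :=
  h.map fun _ _ => HanoiMove.append_left a ha

end Reach

section Strategies

variable {j m₁ m₂ m₃ : ℕ} {a b : α}

theorem HanoiReach.succ_of_path {c : α} (hac : adj a c) (hcb : adj c b) (hab : a ≠ b)
    (ha : a ≠ c) (hb : b ≠ c)
    (h₁ : HanoiReach adj (fun _ : Fin j => a) (fun _ => b) m₁)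
    (h₂ : HanoiReach adj (fun _ : Fin j => b) (fun _ => a) m₂) :
    HanoiReach adj (fun _ : Fin (j + 1) => a) (fun _ => b) (m₁ + 1 + m₂ + 1 + m₁) := by
  have s₁ := h₁.append_right fun _ : Fin 1 => a
  have s₂ := (hanoiMove_last (j := j) hac hab.symm hb).hanoiReach
  have s₃ := h₂.append_right fun _ : Fin 1 => c
  have s₄ := (hanoiMove_last (j := j) hcb ha hab).hanoiReach
  have s₅ := h₁.append_right fun _ : Fin 1 => b
  rw [Fin.append_const] at s₁ s₅
  exact (((s₁.trans s₂).trans s₃).trans s₄).trans s₅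

theorem HanoiReach.frameStewart {ℓ : α} {t : ℕ} (hle : ∀ x y, adj' x y → adj x y)
    (hℓ : ∀ x y, adj' x y → ℓ ≠ x ∧ ℓ ≠ y)
    (h₁ : HanoiReach adj (fun _ : Fin j => a) (fun _ => ℓ) m₁)
    (h₂ : HanoiReach adj' (fun _ : Fin t => a) (fun _ => b) m₂)
    (h₃ : HanoiReach adj (fun _ : Fin j => ℓ) (fun _ => b) m₃) :
    HanoiReach adj (fun _ : Fin (j + t) => a) (fun _ => b) (m₁ + m₂ + m₃) := by
  have s₁ := h₁.append_right fun _ : Fin t => a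
  have s₂ := (h₂.append_left (fun _ : Fin j => ℓ) fun _ => hℓ).mono hle
  have s₃ := h₃.append_right fun _ : Fin t => b
  rw [Fin.append_const] at s₁ s₃
  exact (s₁.trans s₂).trans s₃

end Strategies

theorem exists_hanoiReach_le_of_path {f : ℕ → ℕ} (hf : ∀ n, 3 * f n + 2 ≤ f (n + 1))
    {a b c : α} (hac : adj a c) (hca : adj c a) (hbc : adj b c) (hcb : adj c b) (hab : a ≠ b)
    (ha : a ≠ c) (hb : b ≠ c) (n : ℕ) :
    ∃ m ≤ f n, HanoiReach adj (fun _ : Fin n => a) (fun _ => b) m := by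
  induction n generalizing a b with
  | zero => exact ⟨0, Nat.zero_le _, hanoiReach_fin_zero _ _⟩
  | succ n ih =>
    obtain ⟨m₁, hm₁, h₁⟩ := ih hac hca hbc hcb hab ha hb
    obtain ⟨m₂, hm₂, h₂⟩ := ih hbc hcb hac hca hab.symm hb ha
    exact ⟨_, by linarith [hf n], h₁.succ_of_path hac hcb hab ha hb h₂⟩

def StarOn (c : α) (S : Finset α) (x y : α) : Prop :=
  (x = c ∧ y ∈ S) ∨ (y = c ∧ x ∈ S)

namespace StarOn

variable {c x y : α} {S T : Finset α}

theorem mono (hST : S ⊆ T) (h : StarOn c S x y) : StarOn c T x y :=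
  h.imp (And.imp_right (hST ·)) (And.imp_right (hST ·))

theorem ne_of_notMem {ℓ : α} (hℓc : ℓ ≠ c) (hℓS : ℓ ∉ S) (h : StarOn c S x y) :
    ℓ ≠ x ∧ ℓ ≠ y := by
  unfold StarOn at h
  grind

end StarOn

theorem exists_hanoiReach_starOn_le [DecidableEq α] {H : ℕ → ℕ → ℕ}
    (h3 : ∀ n, 3 * H 3 n + 2 ≤ H 3 (n + 1))
    (hsplit : ∀ p n, 3 ≤ p → 0 < n →
      ∃ j t, 0 < t ∧ j + t = n ∧ 2 * H (p + 1) j + H p t ≤ H (p + 1) n)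
    {c : α} {S : Finset α} (hcS : c ∉ S) (hS : 2 ≤ S.card) (n : ℕ) {a b : α}
    (ha : a ∈ S) (hb : b ∈ S) (hab : a ≠ b) :
    ∃ m ≤ H (S.card + 1) n, HanoiReach (StarOn c S) (fun _ : Fin n => a) (fun _ => b) m := by
  obtain ⟨p, hp⟩ : ∃ p, S.card = p := ⟨_, rfl⟩
  rw [hp] at hS ⊢
  induction p, hS using Nat.le_induction generalizing S n a b with
  | base =>
    have hac : a ≠ c := fun h => hcS (h ▸ ha)
    have hbc : b ≠ c := fun h => hcS (h ▸ hb)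
    exact exists_hanoiReach_le_of_path h3 (.inr ⟨rfl, ha⟩) (.inl ⟨rfl, ha⟩) (.inr ⟨rfl, hb⟩)
      (.inl ⟨rfl, hb⟩) hab hac hbc n
  | succ p hp₂ ihp =>
    induction n using Nat.strong_induction_on generalizing a b with
    | _ n ihn =>
      rcases Nat.eq_zero_or_pos n with rfl | hn
      · exact ⟨0, Nat.zero_le _, hanoiReach_fin_zero _ _⟩
      obtain ⟨j, t, ht, rfl, hH⟩ := hsplit (p + 1) n (by omega) hn
      obtain ⟨ℓ, hℓS, hℓab⟩ := Finset.exists_mem_notMem_of_card_lt_card (s := {a, b}) (t := S)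
        (Finset.card_le_two.trans_lt (by omega))
      have hℓa : ℓ ≠ a := fun h => hℓab (by simp [h])
      have hℓb : ℓ ≠ b := fun h => hℓab (by simp [h])
      obtain ⟨m₁, hm₁, h₁⟩ := ihn j (by omega) ha hℓS hℓa.symm
      obtain ⟨m₃, hm₃, h₃⟩ := ihn j (by omega) hℓS hb hℓb
      obtain ⟨m₂, hm₂, h₂⟩ := ihp (fun h => hcS (Finset.mem_of_mem_erase h)) t
        (Finset.mem_erase.2 ⟨hℓa.symm, ha⟩) (Finset.mem_erase.2 ⟨hℓb.symm, hb⟩) hab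
        (by rw [Finset.card_erase_of_mem hℓS, hp]; rfl)
      refine ⟨m₁ + m₂ + m₃, by omega, h₁.frameStewart (fun _ _ => StarOn.mono (S.erase_subset ℓ))
        (fun _ _ => StarOn.ne_of_notMem (fun h => hcS (h ▸ hℓS)) (S.notMem_erase ℓ)) h₂ h₃⟩

theorem exists_split_of_eq_sInf {f g : ℕ → ℕ} {n : ℕ} (hn : 0 < n)
    (h : f n = sInf {v | ∃ t, 1 ≤ t ∧ t ≤ n ∧ v = 2 * f (n - t) + g t}) :
    ∃ j t, 0 < t ∧ j + t = n ∧ 2 * f j + g t ≤ f n := by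
  have hne : {v | ∃ t, 1 ≤ t ∧ t ≤ n ∧ v = 2 * f (n - t) + g t}.Nonempty := ⟨_, n, hn, le_rfl, rfl⟩
  obtain ⟨t, ht, htn, hmin⟩ : f n ∈ _ := h ▸ Nat.sInf_mem hne
  exact ⟨n - t, t, ht, Nat.sub_add_cancel htn, hmin.ge⟩

theorem hanoi_star_upper_bound_general
    (k : ℕ) (hk : 2 ≤ k)
    (H : ℕ → ℕ → ℕ)
    (hH3 : ∀ n, 1 ≤ n → H 3 n = 3 * H 3 (n - 1) + 2)
    (hHk : ∀ k', 4 ≤ k' → ∀ n, 1 ≤ n →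
      H k' n = sInf {v | ∃ t, 1 ≤ t ∧ t ≤ n ∧ v = 2 * H k' (n - t) + H (k' - 1) t})
    (n : ℕ) :
    ∃ m, m ≤ H (k + 1) n ∧
      HanoiReach (StarAdj k) (fun _ : Fin n => (1 : Fin (k + 1))) (fun _ => 2) m := by
  obtain ⟨k, rfl⟩ : ∃ j, k = j + 2 := ⟨k - 2, by omega⟩
  have h3 (n : ℕ) : 3 * H 3 n + 2 ≤ H 3 (n + 1) := (hH3 (n + 1) n.succ_pos).ge
  have hsplit (p n : ℕ) (hp : 3 ≤ p) (hn : 0 < n) :=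
    exists_split_of_eq_sInf hn (hHk (p + 1) (by omega) n hn)
  have h2 : (2 : Fin (k + 2 + 1)) ≠ 0 := Fin.ne_of_val_ne (by rw [Fin.val_two]; simp)
  have h12 : (1 : Fin (k + 2 + 1)) ≠ 2 := Fin.ne_of_val_ne (by rw [Fin.val_two]; simp)
  obtain ⟨m, hm, hreach⟩ := exists_hanoiReach_starOn_le h3 hsplit (Finset.notMem_erase 0 .univ)
    (by simp) n (by simp) (Finset.mem_erase.2 ⟨h2, Finset.mem_univ _⟩) h12
  refine ⟨m, by simpa using hm, hreach.mono fun x y hxy => ?_⟩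
  simpa [StarOn, StarAdj] using hxy

/-- Tower of Hanoi on the star graph S_k, leaf to leaf: the generalized Frame–Stewart
number H_{k+1}(n) with (p₃,q₃) = (3,2) and (p_i,q_i) = (2,1) for i ≥ 4 is an
upper bound on the minimum number of moves. -/
theorem hanoi_star_upper_bound
    (k : ℕ) (hk : 2 ≤ k)
    (H : ℕ → ℕ → ℕ)
    (hH0 : ∀ k', H k' 0 = 0)
    (hH3 : ∀ n, 1 ≤ n → H 3 n = 3 * H 3 (n - 1) + 2)
    (hHk : ∀ k', 4 ≤ k' → ∀ n, 1 ≤ n →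
      H k' n = sInf {v | ∃ t, 1 ≤ t ∧ t ≤ n ∧ v = 2 * H k' (n - t) + H (k' - 1) t})
    (n : ℕ) :
    ∃ m, m ≤ H (k + 1) n ∧
      HanoiReach (StarAdj k) (fun _ : Fin n => (1 : Fin (k + 1))) (fun _ => 2) m :=
  hanoi_star_upper_bound_general k hk H hH3 hHk n
end

section
/- Define T(0) = 0 and T(n) = min_{1≤t≤n}{ α·T(n−t) + β·(2^t − 1) } for positive integers α, β. Then T(n) = β·Σ_{j=1}^{n} v_j, where (v_j)_{j≥1} is the nondecreasing enumeration with multiplicity of the numbers 2^i·α^j with i, j ≥ 0. -/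
/-!
Write `w (i, j) = 2 ^ i * α ^ j`. Since `v` lists these weights in nondecreasing order,
`S n = v 1 + ⋯ + v n` is the least total weight of an `n`-element set of pairs, attained by the
first `n` pairs of the enumeration. Such a minimal set is a row segment `{(0,0), …, (t-1,0)}`, of
weight `2 ^ t - 1`, together with the raised copy `(i, j) ↦ (i, j + 1)` of an `(n - t)`-element
set, whose weight is multiplied by `α`; conversely every such union has `n` elements. So `S`
satisfies the recurrence of `T / β`, with the minimum attained, and strong induction concludes.
-/

/-- The nondecreasing enumeration `v` (on indices ≥ 1), with multiplicity,
of the numbers 2^i·α^j with i, j ≥ 0. -/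
def IsTwoAlphaEnum (α : ℕ) (v : ℕ → ℕ) : Prop :=
  (∀ j, 1 ≤ j → v j ≤ v (j + 1)) ∧
  ∃ e : {j : ℕ // 1 ≤ j} ≃ (ℕ × ℕ),
    ∀ j : {j : ℕ // 1 ≤ j}, v j.1 = 2 ^ (e j).1 * α ^ (e j).2

open Finset

namespace FrameStewart

section Enumeration

variable {ι M : Type*} {v : ℕ → M} {w : ι → M} (e : {j : ℕ // 1 ≤ j} ≃ ι)

theorem sum_Icc_card_le_sum [AddCommMonoid M] [PartialOrder M] [IsOrderedAddMonoid M]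
    (hv : MonotoneOn v (Set.Ici 1)) (s : Finset ℕ) (hs : ∀ j ∈ s, 1 ≤ j) :
    ∑ j ∈ Icc 1 s.card, v j ≤ ∑ j ∈ s, v j := by
  induction s using Finset.induction_on_max with
  | empty => simp
  | insert a s hlt ih =>
    have ha : a ∉ s := fun h => lt_irrefl a (hlt a h)
    have ha1 : 1 ≤ a := hs a (mem_insert_self a s)
    have hcard : s.card + 1 ≤ a := by
      have hsub : s ⊆ Icc 1 (a - 1) := fun j hj =>
        mem_Icc.2 ⟨hs j (mem_insert_of_mem hj), by have := hlt j hj; omega⟩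
      have := card_le_card hsub
      rw [Nat.card_Icc] at this
      omega
    rw [card_insert_of_notMem ha, sum_Icc_succ_top (by omega), sum_insert ha, add_comm (v a)]
    exact add_le_add (ih fun j hj => hs j (mem_insert_of_mem hj))
      (hv (Set.mem_Ici.2 (by omega)) ha1 hcard)

theorem sum_Icc_card_le_sum_of_equiv [AddCommMonoid M] [PartialOrder M] [IsOrderedAddMonoid M]
    (hv : MonotoneOn v (Set.Ici 1)) (he : ∀ j, v j.1 = w (e j)) (s : Finset ι) :
    ∑ j ∈ Icc 1 s.card, v j ≤ ∑ p ∈ s, w p := by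
  simpa [he] using sum_Icc_card_le_sum hv
    (s.map (e.symm.toEmbedding.trans (Function.Embedding.subtype _)))
    (by simpa using fun p _ => (e.symm p).2)

def enumPrefix (n : ℕ) : Finset ι := ((Icc 1 n).subtype (1 ≤ ·)).map e.toEmbedding

theorem mem_enumPrefix {n : ℕ} {p : ι} : p ∈ enumPrefix e n ↔ (e.symm p : ℕ) ≤ n := by
  simp [enumPrefix, mem_map_equiv, (e.symm p).2]

theorem card_enumPrefix (n : ℕ) : (enumPrefix e n).card = n := by
  simp [enumPrefix, card_subtype, filter_true_of_mem fun j hj => (mem_Icc.1 hj).1]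

theorem sum_enumPrefix [AddCommMonoid M] (he : ∀ j, v j.1 = w (e j)) (n : ℕ) :
    ∑ p ∈ enumPrefix e n, w p = ∑ j ∈ Icc 1 n, v j := by
  simp only [enumPrefix, sum_map, Equiv.coe_toEmbedding, ← he]
  exact sum_subtype_of_mem v fun j hj => (mem_Icc.1 hj).1

theorem le_of_mem_enumPrefix [Preorder M] (hv : MonotoneOn v (Set.Ici 1))
    (he : ∀ j, v j.1 = w (e j)) {n : ℕ} {p q : ι} (hq : q ∈ enumPrefix e n)
    (hp : p ∉ enumPrefix e n) : w q ≤ w p := by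
  rw [mem_enumPrefix] at hq hp
  simpa [he] using hv (e.symm q).2 (e.symm p).2 (by omega)

end Enumeration

def weight (α : ℕ) (p : ℕ × ℕ) : ℕ := 2 ^ p.1 * α ^ p.2

def raise : ℕ × ℕ ↪ ℕ × ℕ := ⟨fun p => (p.1, p.2 + 1), fun p q h => by simpa [Prod.ext_iff] using h⟩

@[simp]
theorem raise_apply (p : ℕ × ℕ) : raise p = (p.1, p.2 + 1) := rfl

theorem weight_raise (α : ℕ) (p : ℕ × ℕ) : weight α (raise p) = α * weight α p := by
  show 2 ^ p.1 * α ^ (p.2 + 1) = α * (2 ^ p.1 * α ^ p.2)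
  ring

theorem sum_weight_range_prod_zero (α t : ℕ) : ∑ p ∈ range t ×ˢ {0}, weight α p = 2 ^ t - 1 := by
  simp [weight, Nat.geomSum_eq le_rfl]

theorem eq_zero_of_weight_le_one {α : ℕ} (hα : 2 ≤ α) {p : ℕ × ℕ} (h : weight α p ≤ 1) :
    p = (0, 0) := by
  obtain ⟨i, j⟩ := p
  have h1 : 2 ^ i * α ^ j = 1 := le_antisymm h (Nat.one_le_iff_ne_zero.2 (by positivity))
  rw [mul_eq_one, Nat.pow_eq_one, Nat.pow_eq_one] at h1
  ext <;> simp <;> omega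

theorem card_range_prod_union_map_raise (t : ℕ) (E : Finset (ℕ × ℕ)) :
    (range t ×ˢ {0} ∪ E.map raise).card = t + E.card := by
  rw [card_union_of_disjoint, card_product, card_map]
  · simp
  · simp [disjoint_left]

theorem sum_weight_range_prod_union_map_raise (α t : ℕ) (E : Finset (ℕ × ℕ)) :
    ∑ p ∈ range t ×ˢ {0} ∪ E.map raise, weight α p = α * ∑ p ∈ E, weight α p + (2 ^ t - 1) := by
  rw [sum_union (by simp [disjoint_left]), sum_weight_range_prod_zero, sum_map, add_comm, mul_sum]
  simp only [weight_raise]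

theorem filter_union_map_preimage_raise (P : Finset (ℕ × ℕ)) :
    P.filter (·.2 = 0) ∪ (P.preimage raise raise.injective.injOn).map raise = P := by
  ext ⟨i, _ | j⟩ <;> simp

theorem exists_filter_snd_eq_zero_eq_range_prod {α : ℕ} (hα : 2 ≤ α) {P : Finset (ℕ × ℕ)}
    (hne : P.Nonempty) (hP : ∀ q ∈ P, ∀ p ∉ P, weight α q ≤ weight α p) :
    ∃ t, 1 ≤ t ∧ P.filter (·.2 = 0) = range t ×ˢ {0} := by
  classical
  have hex : ∃ k, (k, 0) ∉ P := by
    obtain ⟨k, hk⟩ := Infinite.exists_notMem_finset (P.image Prod.fst)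
    exact ⟨k, fun h => hk (mem_image_of_mem _ h)⟩
  have hrow : ∀ k, (k, 0) ∈ P ↔ k < Nat.find hex := by
    refine fun k => ⟨fun hk => ?_, fun hk => not_not.1 (Nat.find_min hex hk)⟩
    have hle : 2 ^ k ≤ 2 ^ Nat.find hex := by simpa [weight] using hP _ hk _ (Nat.find_spec hex)
    rw [Nat.pow_le_pow_iff_right one_lt_two] at hle
    exact lt_of_le_of_ne hle fun h => Nat.find_spec hex (h ▸ hk)
  have h00 : ((0, 0) : ℕ × ℕ) ∈ P := by
    by_contra h00
    obtain ⟨q, hq⟩ := hne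
    exact h00 (eq_zero_of_weight_le_one hα (hP q hq _ h00) ▸ hq)
  refine ⟨Nat.find hex, (hrow 0).1 h00, ?_⟩
  ext ⟨i, j⟩
  simp only [mem_filter, mem_product, mem_range, mem_singleton]
  constructor
  · rintro ⟨h, rfl⟩; exact ⟨(hrow i).1 h, rfl⟩
  · rintro ⟨h, rfl⟩; exact ⟨(hrow i).2 h, rfl⟩

theorem _root_.IsTwoAlphaEnum.monotoneOn {α : ℕ} {v : ℕ → ℕ} (hv : IsTwoAlphaEnum α v) :
    MonotoneOn v (Set.Ici 1) :=
  monotoneOn_of_le_add_one Set.ordConnected_Ici fun a _ ha _ => hv.1 a ha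

theorem _root_.IsTwoAlphaEnum.two_le {α : ℕ} {v : ℕ → ℕ} (hv : IsTwoAlphaEnum α v) : 2 ≤ α := by
  have hmono := hv.monotoneOn
  obtain ⟨-, e, he⟩ := hv
  by_contra! hα
  -- for `α ≤ 1` the infinitely many pairs `(0, k)` weigh at most
  -- `1 < 2 = weight α (1, 0)`, so they all precede `(1, 0)` in the enumeration
  have hmem : ∀ k, ((0, k) : ℕ × ℕ) ∈ enumPrefix e (e.symm (1, 0)) := by
    intro k
    by_contra hk
    have h2 := le_of_mem_enumPrefix e (w := weight α) hmono he
      ((mem_enumPrefix e).2 le_rfl) hk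
    have h1 : α ^ k ≤ 1 := pow_le_one₀ α.zero_le (by omega)
    simp [weight] at h2
    omega
  exact (enumPrefix e _).finite_toSet.not_infinite
    (Set.infinite_of_injective_forall_mem (fun a b h => congrArg Prod.snd h) hmem)

section Recurrence

variable {α : ℕ} {v : ℕ → ℕ}

theorem sum_Icc_le_mul_sum_Icc_add (hv : IsTwoAlphaEnum α v) {n t : ℕ} (htn : t ≤ n) :
    ∑ j ∈ Icc 1 n, v j ≤ α * ∑ j ∈ Icc 1 (n - t), v j + (2 ^ t - 1) := by
  have hmono := hv.monotoneOn
  obtain ⟨-, e, he⟩ := hv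
  set F := range t ×ˢ {0} ∪ (enumPrefix e (n - t)).map raise
  have hF : F.card = n := by rw [card_range_prod_union_map_raise, card_enumPrefix]; omega
  calc ∑ j ∈ Icc 1 n, v j = ∑ j ∈ Icc 1 F.card, v j := by rw [hF]
    _ ≤ ∑ p ∈ F, weight α p := sum_Icc_card_le_sum_of_equiv e hmono he F
    _ = _ := by rw [sum_weight_range_prod_union_map_raise, sum_enumPrefix e he]

theorem exists_mul_sum_Icc_add_le_sum_Icc (hv : IsTwoAlphaEnum α v) {n : ℕ} (hn : 1 ≤ n) :
    ∃ t, 1 ≤ t ∧ t ≤ n ∧ α * ∑ j ∈ Icc 1 (n - t), v j + (2 ^ t - 1) ≤ ∑ j ∈ Icc 1 n, v j := by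
  have hα := hv.two_le
  have hmono := hv.monotoneOn
  obtain ⟨-, e, he⟩ := hv
  set P := enumPrefix e n
  set E := P.preimage raise raise.injective.injOn
  obtain ⟨t, ht, hrow⟩ := exists_filter_snd_eq_zero_eq_range_prod (P := P) hα
    (card_pos.1 (by rw [card_enumPrefix]; omega))
    fun q hq p hp => le_of_mem_enumPrefix e (w := weight α) hmono he hq hp
  have hP : range t ×ˢ {0} ∪ E.map raise = P := hrow ▸ filter_union_map_preimage_raise P
  have hcard : t + E.card = n := by rw [← card_range_prod_union_map_raise, hP, card_enumPrefix]
  refine ⟨t, ht, by omega, ?_⟩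
  calc α * ∑ j ∈ Icc 1 (n - t), v j + (2 ^ t - 1)
      ≤ α * ∑ p ∈ E, weight α p + (2 ^ t - 1) := by
        gcongr
        rw [show n - t = E.card by omega]
        exact sum_Icc_card_le_sum_of_equiv e hmono he E
    _ = ∑ p ∈ P, weight α p := by rw [← sum_weight_range_prod_union_map_raise, hP]
    _ = ∑ j ∈ Icc 1 n, v j := sum_enumPrefix e he n

end Recurrence

theorem eq_of_recurrence {α : ℕ} {c T U : ℕ → ℕ} (hT0 : T 0 = 0)
    (hT : ∀ n, 1 ≤ n → T n = sInf {w | ∃ t, 1 ≤ t ∧ t ≤ n ∧ w = α * T (n - t) + c t})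
    (hU0 : U 0 = 0) (hU_le : ∀ n t, 1 ≤ t → t ≤ n → U n ≤ α * U (n - t) + c t)
    (hU_ex : ∀ n, 1 ≤ n → ∃ t, 1 ≤ t ∧ t ≤ n ∧ α * U (n - t) + c t ≤ U n) (n : ℕ) :
    T n = U n := by
  induction n using Nat.strong_induction_on with
  | _ n ih =>
  rcases Nat.eq_zero_or_pos n with rfl | hn
  · rw [hT0, hU0]
  rw [hT n hn]
  refine IsLeast.csInf_eq ⟨?_, ?_⟩
  · obtain ⟨t, ht, htn, hle⟩ := hU_ex n hn
    exact ⟨t, ht, htn, by rw [ih (n - t) (by omega)]; exact le_antisymm (hU_le n t ht htn) hle⟩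
  · rintro _ ⟨t, ht, htn, rfl⟩
    rw [ih (n - t) (by omega)]
    exact hU_le n t ht htn

end FrameStewart

open FrameStewart in
theorem T_recurrence_sum_formula_general
    (α β : ℕ)
    (T : ℕ → ℕ) (hT0 : T 0 = 0)
    (hT : ∀ n, 1 ≤ n →
      T n = sInf {w | ∃ t, 1 ≤ t ∧ t ≤ n ∧ w = α * T (n - t) + β * (2 ^ t - 1)})
    (v : ℕ → ℕ) (hv : IsTwoAlphaEnum α v)
    (n : ℕ) :
    T n = β * ∑ j ∈ Finset.Icc 1 n, v j := by
  refine eq_of_recurrence (c := fun t => β * (2 ^ t - 1))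
    (U := fun n => β * ∑ j ∈ Finset.Icc 1 n, v j) hT0 hT (by simp)
    (fun n t _ htn => ?_) (fun n hn => ?_) n
  · have := Nat.mul_le_mul_left β (sum_Icc_le_mul_sum_Icc_add hv htn)
    rwa [mul_add, mul_left_comm] at this
  · obtain ⟨t, ht, htn, hle⟩ := exists_mul_sum_Icc_add_le_sum_Icc hv hn
    refine ⟨t, ht, htn, ?_⟩
    have := Nat.mul_le_mul_left β hle
    rwa [mul_add, mul_left_comm] at this

/-- T(n) = min{α·T(n−t) + β·(2^t − 1)} satisfies T(n) = β·Σ_{j=1}^{n} v_j,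
where (v_j) enumerates the numbers 2^i·α^j in nondecreasing order. -/
theorem T_recurrence_sum_formula
    (α β : ℕ) (hα : 1 ≤ α) (hβ : 1 ≤ β)
    (T : ℕ → ℕ) (hT0 : T 0 = 0)
    (hT : ∀ n, 1 ≤ n →
      T n = sInf {w | ∃ t, 1 ≤ t ∧ t ≤ n ∧ w = α * T (n - t) + β * (2 ^ t - 1)})
    (v : ℕ → ℕ) (hv : IsTwoAlphaEnum α v)
    (n : ℕ) (hn : 1 ≤ n) :
    T n = β * ∑ j ∈ Finset.Icc 1 n, v j :=
  T_recurrence_sum_formula_general α β T hT0 hT v hv n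
end
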